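/- arXiv:1102.3161 — 6 statements merged into one kernel-verified Lean document; each statement's English description precedes it below -/
import Mathlib

section
/- For every integer k ≥ 3, the only k-cycle in S_k (written with smallest element 1 first) that cycle-avoids the pattern 1 2 3 is the cycle (1, k, k-1, …, 2). Hence L_k^{ca}(123) = 1 for all k ≥ 3. -/
/-- A cyclic occurrence of the pattern `τ ∈ S_j` in the cycle word of an `m`-cycle,
where the `m`-cycle in `S_m` (written with smallest element first) is represented by
the word `c 0, c 1, …, c (m-1)` (0-based values) with `c 0 = 0`. -/
def HasCyclicWordOcc {m j : ℕ} (hm : 0 < m) (c : Equiv.Perm (Fin m))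
    (τ : Equiv.Perm (Fin j)) : Prop :=
  j ≤ m ∧ ∃ (r : ℕ) (f : Fin j → ℕ), StrictMono f ∧ (∀ s : Fin j, (s : ℕ) = 0 → f s = 0) ∧
    (∀ s : Fin j, f s ≤ m - 1) ∧
    ∀ s t : Fin j,
      (c ⟨(r + f s) % m, Nat.mod_lt _ hm⟩ < c ⟨(r + f t) % m, Nat.mod_lt _ hm⟩ ↔ τ s < τ t)

private def tf (k : ℕ) (i : Fin k) : Fin k := ⟨(k - i.val) % k, Nat.mod_lt _ i.pos⟩

private lemma tf_invol (k : ℕ) : Function.Involutive (tf k) := by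
  intro i
  have hi := i.isLt
  apply Fin.ext
  simp only [tf]
  rcases Nat.eq_zero_or_pos i.val with h | h
  · simp [h]
  · rw [Nat.mod_eq_of_lt (show k - i.val < k by omega),
      Nat.mod_eq_of_lt (show k - (k - i.val) < k by omega)]
    omega

private lemma avoid_of_target (k : ℕ) (hk : 3 ≤ k) (c : Equiv.Perm (Fin k))
    (hc : ∀ i : Fin k, (c i : ℕ) = (k - (i : ℕ)) % k) :
    ¬ HasCyclicWordOcc (Nat.lt_of_lt_of_le (by decide) hk) c (1 : Equiv.Perm (Fin 3)) := by
  rintro ⟨h3, r, f, hmono, hf0, hle, hiff⟩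
  have hf0' : f 0 = 0 := hf0 0 rfl
  have hm1 : f 0 < f 1 := hmono (by decide)
  have hm2 : f 1 < f 2 := hmono (by decide)
  have hl2 : f 2 ≤ k - 1 := hle 2
  have H1 := (hiff 0 1).mpr (by simp)
  have H2 := (hiff 1 2).mpr (by simp)
  rw [Fin.lt_def] at H1 H2
  rw [hc, hc] at H1
  rw [hc, hc] at H2
  simp only [Fin.val_mk] at H1 H2
  simp only [hf0', Nat.add_zero] at H1
  have hb0 : (r + f 1) % k = (r % k + f 1) % k := by
    rw [Nat.add_mod, Nat.mod_eq_of_lt (show f 1 < k by omega)]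
  have hd0 : (r + f 2) % k = (r % k + f 2) % k := by
    rw [Nat.add_mod, Nat.mod_eq_of_lt (show f 2 < k by omega)]
  rw [hb0] at H1 H2
  rw [hd0] at H2
  have ha : r % k < k := Nat.mod_lt _ (by omega)
  have emod : ∀ x y : ℕ, x < k → y < k →
      ((x + y) % k = x + y ∧ x + y < k) ∨ ((x + y) % k + k = x + y ∧ k ≤ x + y) := by
    intro x y hx hy
    rcases lt_or_ge (x + y) k with h | h
    · exact Or.inl ⟨Nat.mod_eq_of_lt h, h⟩
    · refine Or.inr ⟨?_, h⟩
      rw [Nat.mod_eq_sub_mod h, Nat.mod_eq_of_lt (by omega)]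
      omega
  have vmod : ∀ x : ℕ, x < k → ((k - x) % k = 0 ∧ x = 0) ∨ ((k - x) % k = k - x ∧ 0 < x) := by
    intro x hx
    rcases Nat.eq_zero_or_pos x with h | h
    · left; simp [h]
    · exact Or.inr ⟨Nat.mod_eq_of_lt (by omega), h⟩
  have hb := emod (r % k) (f 1) ha (by omega)
  have hd := emod (r % k) (f 2) ha (by omega)
  have v0 := vmod (r % k) ha
  have v1 := vmod ((r % k + f 1) % k) (Nat.mod_lt _ (by omega))
  have v2 := vmod ((r % k + f 2) % k) (Nat.mod_lt _ (by omega))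
  generalize hA : r % k = A at *
  generalize hB : (A + f 1) % k = B at *
  generalize hD : (A + f 2) % k = D at *
  generalize (k - A) % k = VA at *
  generalize (k - B) % k = VB at *
  generalize (k - D) % k = VD at *
  omega

private lemma target_of_avoid (k : ℕ) (hk : 3 ≤ k) (c : Equiv.Perm (Fin k))
    (h0 : c ⟨0, Nat.lt_of_lt_of_le (by decide) hk⟩ = ⟨0, Nat.lt_of_lt_of_le (by decide) hk⟩)
    (hav : ¬ HasCyclicWordOcc (Nat.lt_of_lt_of_le (by decide) hk) c (1 : Equiv.Perm (Fin 3))) :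
    ∀ i : Fin k, (c i : ℕ) = (k - (i : ℕ)) % k := by
  have hdec : ∀ a b : Fin k, 0 < (a : ℕ) → a < b → c b < c a := by
    intro a b ha hab
    by_contra hcon
    push_neg at hcon
    have hne : c a ≠ c b := fun h => (Fin.lt_iff_val_lt_val.mp hab).ne (congrArg Fin.val (c.injective h))
    have hlt : c a < c b := lt_of_le_of_ne hcon hne
    have hb : 0 < (b : ℕ) := lt_trans ha (Fin.lt_iff_val_lt_val.mp hab)
    have h0a : c ⟨0, by omega⟩ < c a := by
      rw [h0, Fin.lt_def]
      have : c a ≠ c ⟨0, by omega⟩ := fun h => by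
        have := congrArg Fin.val (c.injective h); simp at this; omega
      rw [h0] at this
      have : (c a : ℕ) ≠ 0 := fun hv => this (Fin.ext hv)
      simpa using Nat.pos_of_ne_zero this
    apply hav
    have hab' : (a : ℕ) < (b : ℕ) := hab
    have hak := a.isLt
    have hbk := b.isLt
    refine ⟨by omega, 0,
      (fun s : Fin 3 => if (s : ℕ) = 0 then 0 else if (s : ℕ) = 1 then (a : ℕ) else (b : ℕ)),
      ?_, ?_, ?_, ?_⟩
    · intro s t hst
      rw [Fin.lt_def] at hst
      have hs3 := s.isLt
      have ht3 := t.isLt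
      simp only []
      split_ifs <;> omega
    · intro s hs
      simp [hs]
    · intro s
      simp only []
      split_ifs <;> omega
    · intro s t
      have h0b : c ⟨0, by omega⟩ < c b := lt_trans h0a hlt
      have hone : ∀ u v : Fin 3,
          ((1 : Equiv.Perm (Fin 3)) u < (1 : Equiv.Perm (Fin 3)) v) ↔ (u : ℕ) < (v : ℕ) := by
        intro u v
        rw [Equiv.Perm.one_apply, Equiv.Perm.one_apply, Fin.lt_def]
      have master : ∀ (u : Fin 3) h,
          c ⟨(0 + (if (u : ℕ) = 0 then 0 else if (u : ℕ) = 1 then (a : ℕ) else (b : ℕ))) % k, h⟩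
            = if (u : ℕ) = 0 then c ⟨0, by omega⟩ else if (u : ℕ) = 1 then c a else c b := by
        intro u h
        split_ifs with h1 h2
        · exact congrArg c (Fin.ext (by simp))
        · exact congrArg c (Fin.ext (by simp [Nat.mod_eq_of_lt hak]))
        · exact congrArg c (Fin.ext (by simp [Nat.mod_eq_of_lt hbk]))
      simp only [hone, master]
      rcases s with ⟨sv, hsv⟩
      rcases t with ⟨tv, htv⟩
      interval_cases sv <;> interval_cases tv <;>
        simp only [Fin.val_mk] <;> norm_num <;>
        first
          | exact h0a
          | exact h0b
          | exact hlt
          | exact lt_irrefl _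
          | exact asymm h0a
          | exact asymm h0b
          | exact asymm hlt
          | exact le_of_lt h0a
          | exact le_of_lt h0b
          | exact le_of_lt hlt
  -- upper bounds
  have hub : ∀ j : ℕ, ∀ h : j + 1 < k, (c ⟨j + 1, h⟩ : ℕ) ≤ k - 1 - j := by
    intro j
    induction j with
    | zero => intro h; have := (c ⟨1, h⟩).isLt; omega
    | succ n ih =>
      intro h
      have h1 : n + 1 < k := by omega
      have hih := ih h1
      have hd := hdec ⟨n + 1, h1⟩ ⟨n + 1 + 1, h⟩ (by simp) (by simp [Fin.lt_def])
      rw [Fin.lt_def] at hd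
      omega
  -- lower bounds
  have hlb : ∀ j : ℕ, ∀ _ : j < k - 1, (j : ℕ) + 1 ≤ (c ⟨k - 1 - j, by omega⟩ : ℕ) := by
    intro j
    induction j with
    | zero =>
      intro h
      have hne : c ⟨k - 1, by omega⟩ ≠ ⟨0, by omega⟩ := by
        intro he
        have := congrArg Fin.val (c.injective (he.trans h0.symm))
        simp at this; omega
      have hv : (c ⟨k - 1 - 0, by omega⟩ : ℕ) ≠ 0 := by
        simp only [Nat.sub_zero]
        exact fun hv => hne (Fin.ext hv)
      omega
    | succ n ih =>
      intro h
      have hn : n < k - 1 := by omega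
      have hih := ih hn
      have hd := hdec ⟨k - 1 - (n + 1), by omega⟩ ⟨k - 1 - n, by omega⟩ (by simp; omega)
        (by simp [Fin.lt_def]; omega)
      rw [Fin.lt_def] at hd
      omega
  intro i
  rcases Nat.eq_zero_or_pos (i : ℕ) with h | h
  · have : i = ⟨0, by omega⟩ := Fin.ext h
    rw [this, h0]
    simp [h]
  · obtain ⟨j, hj⟩ : ∃ j, (i : ℕ) = j + 1 := ⟨(i : ℕ) - 1, by omega⟩
    have hik := i.isLt
    have h1 := hub j (by omega)
    have h2 := hlb (k - 2 - j) (by omega)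
    have he : (⟨k - 1 - (k - 2 - j), by omega⟩ : Fin k) = ⟨j + 1, by omega⟩ :=
      Fin.ext (show k - 1 - (k - 2 - j) = j + 1 by omega)
    rw [he] at h2
    have e1 : c i = c ⟨j + 1, by omega⟩ := congrArg c (Fin.ext hj)
    rw [← e1] at h1 h2
    rw [hj, Nat.mod_eq_of_lt (show k - (j + 1) < k by omega)]
    omega

private noncomputable def cc (k : ℕ) : Equiv.Perm (Fin k) := (tf_invol k).toPerm

private lemma cc_apply (k : ℕ) (i : Fin k) : ((cc k) i : ℕ) = (k - (i : ℕ)) % k := rfl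

/-- For `k ≥ 3`, the only `k`-cycle in `S_k` (smallest element first) cycle-avoiding
the pattern `1 2 3` (here the identity of `S_3`, 0-based) is `(1, k, k-1, …, 2)`,
i.e. the word with `c i = (k - i) % k` (0-based values); hence `L_k^{ca}(123) = 1`. -/
theorem stmt1 (k : ℕ) (hk : 3 ≤ k) :
    (∀ c : Equiv.Perm (Fin k), c ⟨0, by omega⟩ = ⟨0, by omega⟩ →
      (¬ HasCyclicWordOcc (by omega) c (1 : Equiv.Perm (Fin 3)) ↔
        ∀ i : Fin k, (c i : ℕ) = (k - (i : ℕ)) % k)) ∧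
    Nat.card {c : Equiv.Perm (Fin k) // c ⟨0, by omega⟩ = ⟨0, by omega⟩ ∧
      ¬ HasCyclicWordOcc (by omega) c (1 : Equiv.Perm (Fin 3))} = 1 := by
  have hcc0 : (cc k) ⟨0, by omega⟩ = ⟨0, by omega⟩ := by
    apply Fin.ext
    rw [cc_apply]
    simp
  have hccav : ¬ HasCyclicWordOcc (by omega) (cc k) (1 : Equiv.Perm (Fin 3)) :=
    avoid_of_target k hk (cc k) (cc_apply k)
  constructor
  · intro c hc0
    exact ⟨target_of_avoid k hk c hc0, fun ht => avoid_of_target k hk c ht⟩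
  · haveI : Unique {c : Equiv.Perm (Fin k) // c ⟨0, by omega⟩ = ⟨0, by omega⟩ ∧
        ¬ HasCyclicWordOcc (by omega) c (1 : Equiv.Perm (Fin 3))} :=
      { default := ⟨cc k, hcc0, hccav⟩
        uniq := by
          rintro ⟨c, hc0, hcav⟩
          have := target_of_avoid k hk c hc0 hcav
          apply Subtype.ext
          apply Equiv.ext
          intro i
          exact Fin.ext ((this i).trans (cc_apply k i).symm) }
    exact Nat.card_unique
end

section
/- Let τ ∈ S_j be a pattern whose first entry is 1, let σ ∈ S_n, and let σ̄ be the word obtained from σ by writing each cycle with smallest element first, ordering the cycles by decreasing smallest elements, and concatenating. Then σ has no cycle τ-match if and only if σ̄ (as a permutation in one-line notation) has no τ-match. -/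
/-- `l` is the word of a cycle of `σ`, written with its smallest element first:
`l` is nonempty, has no repeats, starts with its minimum, consecutive entries are
obtained by applying `σ`, and `σ` maps the last entry back to the first. -/
def IsCycleWord {n : ℕ} (σ : Equiv.Perm (Fin n)) (l : List (Fin n)) : Prop :=
  ∃ h : l ≠ [], l.Nodup ∧ (∀ x ∈ l, l.head h ≤ x) ∧
    l.Chain' (fun x y => y = σ x) ∧ σ (l.getLast h) = l.head h

/-- `σ` has a cycle `τ`-match: some cycle of `σ` of length at least `j`, written
smallest element first, has `j` cyclically consecutive entries order-isomorphic
to the word of `τ` (indices taken modulo the cycle length). -/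
def HasCycleMatch {n j : ℕ} (σ : Equiv.Perm (Fin n)) (τ : Equiv.Perm (Fin j)) : Prop :=
  ∃ l : List (Fin n), IsCycleWord σ l ∧
    ∃ (hl : l ≠ []) (_ : j ≤ l.length) (r : ℕ),
      ∀ s t : Fin j,
        (l.get ⟨(r + (s : ℕ)) % l.length, Nat.mod_lt _ (List.length_pos_of_ne_nil hl)⟩ <
         l.get ⟨(r + (t : ℕ)) % l.length, Nat.mod_lt _ (List.length_pos_of_ne_nil hl)⟩ ↔
          τ s < τ t)

/-- `σ` has a cycle occurrence of `τ`: some cycle of `σ` of length `p ≥ j`, written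
smallest element first, admits a start `r` and offsets `0 = i₀ < i₁ < ⋯ < i_{j-1} ≤ p-1`
whose entries (indices modulo `p`) are order-isomorphic to the word of `τ`. -/
def HasCycleOcc {n j : ℕ} (σ : Equiv.Perm (Fin n)) (τ : Equiv.Perm (Fin j)) : Prop :=
  ∃ l : List (Fin n), IsCycleWord σ l ∧
    ∃ (hl : l ≠ []) (_ : j ≤ l.length) (r : ℕ) (f : Fin j → ℕ),
      StrictMono f ∧ (∀ s : Fin j, (s : ℕ) = 0 → f s = 0) ∧
      (∀ s : Fin j, f s ≤ l.length - 1) ∧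
      ∀ s t : Fin j,
        (l.get ⟨(r + f s) % l.length, Nat.mod_lt _ (List.length_pos_of_ne_nil hl)⟩ <
         l.get ⟨(r + f t) % l.length, Nat.mod_lt _ (List.length_pos_of_ne_nil hl)⟩ ↔
          τ s < τ t)

/-- `w` (with cycle list `L`) is the word `σ̄` obtained from `σ` by writing each cycle
with smallest element first, arranging the cycles by decreasing smallest elements,
and concatenating. -/
def IsBar {n : ℕ} (σ : Equiv.Perm (Fin n)) (L : List (List (Fin n))) (w : List (Fin n)) : Prop :=
  w = L.flatten ∧ (∀ l ∈ L, IsCycleWord σ l) ∧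
    L.Chain' (fun l₁ l₂ => ∃ (h₁ : l₁ ≠ []) (h₂ : l₂ ≠ []), l₂.head h₂ < l₁.head h₁) ∧
    ∀ x : Fin n, x ∈ w

/-- The word `w` has a `τ`-match starting at some position `i`:
`w_i … w_{i+j-1}` is order-isomorphic to the word of `τ`. -/
def HasWordMatch {n j : ℕ} (w : List (Fin n)) (τ : Equiv.Perm (Fin j)) : Prop :=
  ∃ (i : ℕ) (h : i + j ≤ w.length),
    ∀ s t : Fin j,
      (w.get ⟨i + (s : ℕ), by have := s.isLt; omega⟩ <
       w.get ⟨i + (t : ℕ), by have := t.isLt; omega⟩ ↔ τ s < τ t)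

/-- The permutation `σ`, in one-line notation, has a `τ`-match. -/
def HasLinMatch {n j : ℕ} (σ : Equiv.Perm (Fin n)) (τ : Equiv.Perm (Fin j)) : Prop :=
  ∃ (i : ℕ) (h : i + j ≤ n),
    ∀ s t : Fin j,
      (σ ⟨i + (s : ℕ), by have := s.isLt; omega⟩ <
       σ ⟨i + (t : ℕ), by have := t.isLt; omega⟩ ↔ τ s < τ t)

/-- The number of descents of a word. -/
def desList {α : Type*} [LinearOrder α] : List α → ℕ
  | a :: b :: t => (if b < a then 1 else 0) + desList (b :: t)
  | _ => 0

/-- The number of left-to-right minima of a word. -/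
def lrmCount {α : Type*} [LinearOrder α] (w : List α) : ℕ :=
  (Finset.univ.filter (fun j : Fin w.length =>
    ∀ i : Fin w.length, i < j → w.get j < w.get i)).card

/-- The number of descents of a permutation in one-line notation. -/
noncomputable def desPerm {n : ℕ} (σ : Equiv.Perm (Fin n)) : ℕ :=
  Nat.card {i : Fin n // ∃ h : (i : ℕ) + 1 < n, σ ⟨(i : ℕ) + 1, h⟩ < σ i}

lemma getElem_idx_congr {α : Type*} (l : List α) {a b : ℕ} (hab : a = b)
    {ha : a < l.length} : l[a]'ha = l[b]'(hab ▸ ha) := by subst hab; rfl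

lemma cycleWord_getElem {n : ℕ} {σ : Equiv.Perm (Fin n)} {l : List (Fin n)}
    (h : IsCycleWord σ l) (hl : l ≠ []) {k : ℕ} (hk : k < l.length) :
    l[k] = σ^[k] (l.head hl) := by
  obtain ⟨h0, hnd, hmin, hch, hwrap⟩ := h
  induction k with
  | zero => simp [List.head_eq_getElem]
  | succ k ih =>
    have hk' : k < l.length := by omega
    have := (List.isChain_iff_getElem.mp hch) k (by omega)
    rw [Function.iterate_succ_apply', ← ih hk']
    exact this

lemma cycleWord_iterate {n : ℕ} {σ : Equiv.Perm (Fin n)} {l : List (Fin n)}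
    (h : IsCycleWord σ l) (hl : l ≠ []) (k : ℕ) :
    σ^[k] (l.head hl) = l[k % l.length]'(Nat.mod_lt _ (List.length_pos_iff.mpr hl)) := by
  have hp : 0 < l.length := List.length_pos_iff.mpr hl
  induction k with
  | zero => simp [Nat.mod_eq_of_lt hp, List.head_eq_getElem]
  | succ k ih =>
    obtain ⟨h0, hnd, hmin, hch, hwrap⟩ := h
    set p := l.length with hpdef
    set m := k % p with hmdef
    have hm : m < p := Nat.mod_lt _ hp
    have key : (k+1) % p = (m+1) % p := by
      conv_lhs => rw [← Nat.div_add_mod k p, ← hmdef, Nat.add_assoc, Nat.mul_add_mod]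
    rw [Function.iterate_succ_apply', ih]
    by_cases hc : m = p - 1
    · have h1 : (m+1) % p = 0 := by
        have : m + 1 = p := by omega
        rw [this, Nat.mod_self]
      have h2 : l[m]'(by omega) = l.getLast hl := by
        rw [List.getLast_eq_getElem]
        exact getElem_idx_congr l (by omega)
      rw [getElem_idx_congr l (key.trans h1), h2, hwrap, List.head_eq_getElem]
    · have h1 : (m+1) % p = m + 1 := Nat.mod_eq_of_lt (by omega)
      have hcg := (List.isChain_iff_getElem.mp hch) m (by omega)
      rw [getElem_idx_congr l (key.trans h1), ← hcg]

lemma cycleWord_mem_orbit {n : ℕ} {σ : Equiv.Perm (Fin n)} {l : List (Fin n)}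
    (h : IsCycleWord σ l) (hl : l ≠ []) {x : Fin n} (hx : x ∈ l) (y : Fin n) :
    y ∈ l ↔ ∃ k, y = σ^[k] x := by
  obtain ⟨a, ha, hax⟩ := List.mem_iff_getElem.mp hx
  have hxa : x = σ^[a] (l.head hl) := by rw [← hax, cycleWord_getElem h hl ha]
  have hhead : l.head hl = σ^[l.length - a] x := by
    rw [hxa, ← Function.iterate_add_apply]
    have h2 : l.length - a + a = l.length := by omega
    rw [h2, cycleWord_iterate h hl, List.head_eq_getElem]
    exact (getElem_idx_congr l (Nat.mod_self _)).symm
  constructor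
  · intro hy
    obtain ⟨b, hb, hby⟩ := List.mem_iff_getElem.mp hy
    refine ⟨b + (l.length - a), ?_⟩
    rw [← hby, cycleWord_getElem h hl hb, hhead, ← Function.iterate_add_apply]
  · rintro ⟨k, rfl⟩
    rw [hxa, ← Function.iterate_add_apply, cycleWord_iterate h hl]
    exact List.getElem_mem _

lemma cycleWord_unique {n : ℕ} {σ : Equiv.Perm (Fin n)} {l l' : List (Fin n)}
    (h : IsCycleWord σ l) (h' : IsCycleWord σ l') {x : Fin n}
    (hx : x ∈ l) (hx' : x ∈ l') : l = l' := by
  obtain ⟨hl, hnd, hmin, -, -⟩ := id h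
  obtain ⟨hl', hnd', hmin', -, -⟩ := id h'
  have hmemiff : ∀ y, y ∈ l ↔ y ∈ l' := fun y => by
    rw [cycleWord_mem_orbit h hl hx, cycleWord_mem_orbit h' hl' hx']
  have hperm : l.Perm l' := (List.perm_ext_iff_of_nodup hnd hnd').mpr hmemiff
  have hlen : l.length = l'.length := hperm.length_eq
  have hhead : l.head hl = l'.head hl' := by
    apply le_antisymm
    · exact hmin _ ((hmemiff _).mpr (List.head_mem hl'))
    · exact hmin' _ ((hmemiff _).mp (List.head_mem hl))
  refine List.ext_getElem hlen fun k h₁ h₂ => ?_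
  rw [cycleWord_getElem h hl h₁, cycleWord_getElem h' hl' h₂, hhead]

example : True := trivial

lemma extract_block {n j : ℕ} (hj : 0 < j) (τ : Equiv.Perm (Fin j))
    (hτ : τ ⟨0, hj⟩ = ⟨0, hj⟩)
    (L : List (List (Fin n)))
    (hmin : ∀ l ∈ L, ∃ h : l ≠ [], ∀ x ∈ l, l.head h ≤ x)
    (hchain : L.Chain' (fun l₁ l₂ => ∃ (h₁ : l₁ ≠ []) (h₂ : l₂ ≠ []), l₂.head h₂ < l₁.head h₁))
    (i : ℕ) (hij : i + j ≤ L.flatten.length)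
    (hm : ∀ (s t : Fin j) (hs : i + (s:ℕ) < L.flatten.length) (ht : i + (t:ℕ) < L.flatten.length),
      (L.flatten[i + (s:ℕ)]'hs < L.flatten[i + (t:ℕ)]'ht ↔ τ s < τ t)) :
    ∃ l ∈ L, ∃ r, r + j ≤ l.length ∧
      ∀ (s : Fin j) (h1 : i + (s:ℕ) < L.flatten.length) (h2 : r + (s:ℕ) < l.length),
        L.flatten[i + (s:ℕ)]'h1 = l[r + (s:ℕ)]'h2 := by
  induction L generalizing i with
  | nil => simp at hij; omega
  | cons l L' ih =>
    have hflat : (l :: L').flatten = l ++ L'.flatten := List.flatten_cons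
    have hlen : (l :: L').flatten.length = l.length + L'.flatten.length := by
      rw [hflat, List.length_append]
    by_cases hc1 : i + j ≤ l.length
    · refine ⟨l, List.mem_cons_self, i, hc1, fun s t1 t2 => ?_⟩
      have : ((l :: L').flatten)[i + (s:ℕ)]'t1 = (l ++ L'.flatten)[i + (s:ℕ)]'(hflat ▸ t1) := by
        congr 1
      rw [this]
      exact List.getElem_append_left t2
    · by_cases hc2 : l.length ≤ i
      · have hlb : ∀ (k : ℕ) (hk : i - l.length + k < L'.flatten.length),
            ((l :: L').flatten)[i + k]'(by omega) = L'.flatten[i - l.length + k]'hk := by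
          intro k hk
          have e : ((l :: L').flatten)[i + k]'(by omega) =
              (l ++ L'.flatten)[i + k]'(by rw [List.length_append]; omega) := by congr 1
          rw [e, List.getElem_append_right (by omega)]
          exact getElem_idx_congr _ (by omega)
        obtain ⟨l'', hmem, r, hr, hget⟩ := ih
          (fun m hm => hmin m (List.mem_cons_of_mem _ hm)) hchain.tail
          (i - l.length) (by omega)
          (fun s t hs ht => by
            rw [← hlb (s:ℕ) hs, ← hlb (t:ℕ) ht]
            exact hm s t (by omega) (by omega))
        refine ⟨l'', List.mem_cons_of_mem _ hmem, r, hr, fun s h1 h2 => ?_⟩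
        have hs' : i - l.length + (s:ℕ) < L'.flatten.length := by
          rw [hlen] at h1; omega
        rw [hlb (s:ℕ) hs']
        exact hget s hs' h2
      · exfalso
        push_neg at hc1 hc2
        obtain ⟨hlne, hlmin⟩ := hmin l (List.mem_cons_self)
        have hL'pos : 0 < L'.flatten.length := by rw [hlen] at hij; omega
        have hL'ne : L' ≠ [] := by rintro rfl; simp at hL'pos
        obtain ⟨l₂, L'', hLL⟩ := List.exists_cons_of_ne_nil hL'ne
        subst hLL
        obtain ⟨hl₂ne, hl₂min⟩ := hmin l₂ (List.mem_cons_of_mem _ (List.mem_cons_self))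
        obtain ⟨hh₁, hh₂, hheadlt⟩ := (List.isChain_cons_cons.mp hchain).1
        have ht0j : l.length - i < j := by omega
        set s0 : Fin j := ⟨0, hj⟩ with hs0def
        set s1 : Fin j := ⟨l.length - i, ht0j⟩ with hs1def
        have hv0 : (s0 : ℕ) = 0 := rfl
        have hv1 : (s1 : ℕ) = l.length - i := rfl
        have hτlt : τ s0 < τ s1 := by
          rw [hτ, Fin.lt_def]
          rcases Nat.eq_zero_or_pos ((τ s1 : Fin j) : ℕ) with hz | hz
          · exfalso
            have he : τ s1 = τ s0 := by rw [hτ]; exact Fin.ext hz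
            have := τ.injective he
            rw [hs0def, hs1def, Fin.mk.injEq] at this
            omega
          · exact hz
        have hb0 : i + (s0 : ℕ) < (l :: l₂ :: L'').flatten.length := by rw [hlen, hv0]; omega
        have hb1 : i + (s1 : ℕ) < (l :: l₂ :: L'').flatten.length := by rw [hlen, hv1]; omega
        have key := (hm s0 s1 hb0 hb1).mpr hτlt
        have hl₂pos : 0 < l₂.length := List.length_pos_iff.mpr hl₂ne
        have e0 : ((l :: l₂ :: L'').flatten)[i + (s0:ℕ)]'hb0 = l[i]'(by omega) :=
          calc ((l :: l₂ :: L'').flatten)[i + (s0:ℕ)]'hb0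
              = (l ++ (l₂ :: L'').flatten)[i]'(by
                  rw [List.length_append]; rw [hlen, hv0] at hb0; omega) :=
                getElem_idx_congr _ (by rw [hv0]; omega)
            _ = l[i]'(by omega) := List.getElem_append_left (by omega)
        have e1 : ((l :: l₂ :: L'').flatten)[i + (s1:ℕ)]'hb1 = l₂.head hl₂ne :=
          calc ((l :: l₂ :: L'').flatten)[i + (s1:ℕ)]'hb1
              = (l ++ (l₂ :: L'').flatten)[l.length]'(by
                  rw [List.length_append, List.flatten_cons, List.length_append]; omega) :=
                getElem_idx_congr _ (by rw [hv1]; omega)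
            _ = ((l₂ :: L'').flatten)[l.length - l.length]'(by
                  rw [List.flatten_cons, List.length_append]; omega) :=
                List.getElem_append_right (le_refl _)
            _ = (l₂ ++ L''.flatten)[0]'(by rw [List.length_append]; omega) :=
                getElem_idx_congr _ (by omega)
            _ = l₂[0]'hl₂pos := List.getElem_append_left hl₂pos
            _ = l₂.head hl₂ne := (List.head_eq_getElem _).symm
        rw [e0, e1] at key
        have h3 : l.head hlne ≤ l[i]'(by omega) := hlmin _ (List.getElem_mem _)
        have h4 : l₂.head hl₂ne < l.head hlne := hheadlt
        exact absurd (lt_trans key h4) (not_lt.mpr h3)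

/-- If the pattern `τ ∈ S_j` starts with `1` (0-based: `τ 0 = 0`) and `σ̄` is the word
obtained from `σ` by writing each cycle smallest element first, ordering cycles by
decreasing smallest elements and concatenating, then `σ` has no cycle `τ`-match
if and only if `σ̄` has no `τ`-match. -/
theorem stmt5 {n j : ℕ} (hj : 0 < j) (τ : Equiv.Perm (Fin j))
    (hτ : τ ⟨0, hj⟩ = ⟨0, hj⟩) (σ : Equiv.Perm (Fin n))
    (L : List (List (Fin n))) (w : List (Fin n)) (hbar : IsBar σ L w) :
    ¬ HasCycleMatch σ τ ↔ ¬ HasWordMatch w τ := by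
  obtain ⟨hw, hcyc, hchain, hall⟩ := hbar
  subst hw
  rw [not_iff_not]
  constructor
  · -- cycle match → word match
    rintro ⟨l, hcw, hl, hjlen, r, hmatch⟩
    have hppos : 0 < l.length := List.length_pos_iff.mpr hl
    have hr' : r % l.length < l.length := Nat.mod_lt _ hppos
    obtain ⟨hne2, hnd, hmn, -, -⟩ := id hcw
    have hmod : ∀ s : ℕ, (r % l.length + s) % l.length = (r + s) % l.length :=
      fun s => Nat.mod_add_mod r l.length s
    -- no wraparound
    have hnwrap : r % l.length + j ≤ l.length := by
      by_contra hcon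
      push_neg at hcon
      have ht0j : l.length - r % l.length < j := by omega
      set s1 : Fin j := ⟨l.length - r % l.length, ht0j⟩ with hs1def
      have hv1 : (s1 : ℕ) = l.length - r % l.length := rfl
      have hτlt : τ ⟨0, hj⟩ < τ s1 := by
        rw [hτ, Fin.lt_def]
        rcases Nat.eq_zero_or_pos ((τ s1 : Fin j) : ℕ) with hz | hz
        · exfalso
          have he : τ s1 = τ ⟨0, hj⟩ := by rw [hτ]; exact Fin.ext hz
          have := τ.injective he
          rw [hs1def, Fin.mk.injEq] at this
          omega
        · exact hz
      have key := (hmatch ⟨0, hj⟩ s1).mpr hτlt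
      simp only [List.get_eq_getElem] at key
      have e1 : l[(r + ((⟨0, hj⟩ : Fin j) : ℕ)) % l.length]'(Nat.mod_lt _ hppos) =
          l[r % l.length]'hr' := getElem_idx_congr _ (by norm_num)
      have idx2 : (r + (s1 : ℕ)) % l.length = 0 := by
        rw [hv1]
        have h2 : r + (l.length - r % l.length) = l.length * (r / l.length) + l.length := by
          have := Nat.div_add_mod r l.length
          omega
        rw [h2, Nat.mul_add_mod, Nat.mod_self]
      have e2 : l[(r + (s1 : ℕ)) % l.length]'(Nat.mod_lt _ hppos) =
          l[0]'hppos := getElem_idx_congr _ idx2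
      rw [e1, e2] at key
      have h3 : l.head hne2 ≤ l[r % l.length]'hr' := hmn _ (List.getElem_mem _)
      rw [List.head_eq_getElem] at h3
      exact absurd key (not_lt.mpr h3)
    -- l is one of the blocks of L
    have hlL : l ∈ L := by
      have hx : l.head hl ∈ L.flatten := hall _
      obtain ⟨l'', hl''L, hxl''⟩ := List.mem_flatten.mp hx
      have heq : l = l'' := cycleWord_unique hcw (hcyc l'' hl''L) (List.head_mem hl) hxl''
      exact heq ▸ hl''L
    obtain ⟨u, v, huv⟩ := List.infix_of_mem_flatten hlL
    have hwlen : L.flatten.length = u.length + l.length + v.length := by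
      rw [← huv]; simp [List.length_append]; omega
    refine ⟨u.length + r % l.length, by omega, fun s t => ?_⟩
    have eg : ∀ (s : Fin j) (hb : u.length + r % l.length + (s : ℕ) < L.flatten.length),
        L.flatten.get ⟨u.length + r % l.length + (s : ℕ), hb⟩ =
        l.get ⟨(r + (s : ℕ)) % l.length, Nat.mod_lt _ hppos⟩ := by
      intro s hb
      have hs := s.isLt
      have h1 : (r + (s : ℕ)) % l.length = r % l.length + (s : ℕ) := by
        rw [← hmod]; exact Nat.mod_eq_of_lt (by omega)
      simp only [List.get_eq_getElem]
      calc L.flatten[u.length + r % l.length + (s : ℕ)]'hb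
          = (u ++ l ++ v)[u.length + r % l.length + (s : ℕ)]'(by rw [huv]; exact hb) := by
            congr 1; exact huv.symm
        _ = (u ++ l)[u.length + r % l.length + (s : ℕ)]'(by
              rw [List.length_append]; omega) :=
            List.getElem_append_left (by rw [List.length_append]; omega)
        _ = l[u.length + r % l.length + (s : ℕ) - u.length]'(by omega) :=
            List.getElem_append_right (by omega)
        _ = l[(r + (s : ℕ)) % l.length]'(Nat.mod_lt _ hppos) :=
            getElem_idx_congr _ (by omega)
    rw [eg s _, eg t _]
    exact hmatch s t
  · -- word match → cycle match
    rintro ⟨i, hij, hmatch⟩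
    obtain ⟨l, hlL, r, hrj, hget⟩ := extract_block hj τ hτ L
      (fun m hm => (hcyc m hm).imp (fun h hh => hh.2.1)) hchain i hij
      (fun s t hs ht => by
        have := hmatch s t
        simp only [List.get_eq_getElem] at this
        exact this)
    obtain ⟨hlne, -⟩ := id (hcyc l hlL)
    refine ⟨l, hcyc l hlL, hlne, by omega, r, fun s t => ?_⟩
    have hp : 0 < l.length := List.length_pos_iff.mpr hlne
    have es : ∀ s : Fin j,
        l.get ⟨(r + (s : ℕ)) % l.length, Nat.mod_lt _ (List.length_pos_iff.mpr hlne)⟩ =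
        L.flatten.get ⟨i + (s : ℕ), by have := s.isLt; omega⟩ := by
      intro s
      have hs := s.isLt
      simp only [List.get_eq_getElem]
      have e1 : l[(r + (s : ℕ)) % l.length]'(Nat.mod_lt _ hp) =
          l[r + (s : ℕ)]'(by omega) :=
        getElem_idx_congr _ (Nat.mod_eq_of_lt (by omega))
      rw [e1]
      exact (hget s (by omega) (by omega)).symm
    rw [es s, es t]
    exact hmatch s t
end

section
/- For every pattern τ ∈ S_j with first entry 1 and every n ≥ 1, the number of permutations of S_n with no cycle τ-match equals the number of permutations of S_n with no τ-match, i.e., ncmS_n(τ) = nmS_n(τ). -/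
namespace Foata


variable {n : ℕ} (σ : Equiv.Perm (Fin n))

lemma per_pos (x : Fin n) : 0 < Function.minimalPeriod σ x := by
  apply Function.minimalPeriod_pos_of_mem_periodicPts
  exact ⟨orderOf σ, orderOf_pos σ, by
    simp [Function.IsPeriodicPt, Function.IsFixedPt, Equiv.Perm.iterate_eq_pow, pow_orderOf_eq_one]⟩

lemma pow_per (x : Fin n) : (σ ^ Function.minimalPeriod σ x) x = x :=
  Function.isPeriodicPt_minimalPeriod σ x

noncomputable def cw (x : Fin n) : List (Fin n) :=
  (List.range (Function.minimalPeriod σ x)).map (fun i => (σ ^ i) x)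

lemma cw_length (x : Fin n) : (cw σ x).length = Function.minimalPeriod σ x := by
  simp [cw]

lemma cw_ne_nil (x : Fin n) : cw σ x ≠ [] := by
  have := per_pos σ x
  simp [cw, List.range_eq_nil]
  omega

lemma cw_get (x : Fin n) (i : ℕ) (hi : i < (cw σ x).length) :
    (cw σ x).get ⟨i, hi⟩ = (σ ^ i) x := by
  simp [cw]

lemma cw_head (x : Fin n) : (cw σ x).head (cw_ne_nil σ x) = x := by
  have h0 : 0 < (cw σ x).length := List.length_pos_iff.mpr (cw_ne_nil σ x)
  have := cw_get σ x 0 h0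
  rw [← List.get_mk_zero h0, this]
  simp

lemma cw_nodup (x : Fin n) : (cw σ x).Nodup := by
  refine List.Nodup.map_on ?_ List.nodup_range
  intro a ha b hb hab
  rw [List.mem_range] at ha hb
  exact Function.iterate_injOn_Iio_minimalPeriod ha hb (by simpa [Equiv.Perm.iterate_eq_pow] using hab)

lemma cw_chain' (x : Fin n) : (cw σ x).Chain' (fun a b => b = σ a) := by
  rw [cw, List.Chain', List.isChain_map]
  obtain ⟨p, hp⟩ : ∃ p, Function.minimalPeriod σ x = p + 1 :=
    ⟨_, (Nat.succ_pred_eq_of_pos (per_pos σ x)).symm⟩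
  rw [hp, List.isChain_range_succ]
  intro m _
  rw [pow_succ']
  rfl

lemma cw_getLast (x : Fin n) : σ ((cw σ x).getLast (cw_ne_nil σ x)) = (cw σ x).head (cw_ne_nil σ x) := by
  have h := per_pos σ x
  rw [cw_head, List.getLast_eq_getElem]
  rw [show (cw σ x)[(cw σ x).length - 1]'(by rw [cw_length]; omega) = (cw σ x).get ⟨(cw σ x).length - 1, by rw [cw_length]; omega⟩ from rfl, cw_get σ x _ _]
  show (σ ^ 1) ((σ ^ ((cw σ x).length - 1)) x) = x
  rw [← Equiv.Perm.mul_apply, ← pow_add, cw_length]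
  rw [Nat.one_add]
  have : (Function.minimalPeriod (⇑σ) x - 1).succ = Function.minimalPeriod (⇑σ) x := by omega
  rw [this, pow_per]

lemma mem_cw (x y : Fin n) : y ∈ cw σ x ↔ σ.SameCycle x y := by
  constructor
  · rintro h
    simp only [cw, List.mem_map, List.mem_range] at h
    obtain ⟨i, _, rfl⟩ := h
    exact ⟨i, by simp⟩
  · intro h
    obtain ⟨i, _, rfl⟩ := h.exists_pow_eq'
    simp only [cw, List.mem_map, List.mem_range]
    refine ⟨i % Function.minimalPeriod σ x, Nat.mod_lt _ (per_pos σ x), ?_⟩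
    have := Function.iterate_mod_minimalPeriod_eq (f := ⇑σ) (n := i) (x := x)
    exact this


def IsCycMin (x : Fin n) : Prop := ∀ y, σ.SameCycle x y → x ≤ y

open scoped Classical in
noncomputable def mins : List (Fin n) :=
  ((Finset.univ.filter fun x => IsCycMin σ x).sort (· ≤ ·)).reverse

lemma mem_mins (x : Fin n) : x ∈ mins σ ↔ IsCycMin σ x := by
  classical
  simp [mins, Finset.mem_sort]

lemma mins_nodup : (mins σ).Nodup := by
  classical
  simp [mins]

lemma mins_chain' : (mins σ).Chain' (fun a b => b < a) := by
  classical
  apply List.Pairwise.isChain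
  rw [mins, List.pairwise_reverse]
  exact (Finset.sortedLT_sort _).pairwise

noncomputable def minOf (x : Fin n) : Fin n := by
  classical
  exact (Finset.univ.filter fun y => σ.SameCycle x y).min'
    ⟨x, by simp [Finset.mem_filter, Equiv.Perm.SameCycle.refl]⟩

lemma minOf_sameCycle (x : Fin n) : σ.SameCycle x (minOf σ x) := by
  classical
  have := Finset.min'_mem (Finset.univ.filter fun y => σ.SameCycle x y)
    ⟨x, by simp [Finset.mem_filter, Equiv.Perm.SameCycle.refl]⟩
  simpa [minOf, Finset.mem_filter] using this

lemma minOf_isMin (x : Fin n) : IsCycMin σ (minOf σ x) := by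
  classical
  intro y hy
  have hxy : σ.SameCycle x y := (minOf_sameCycle σ x).trans hy
  exact Finset.min'_le _ y (by simp [Finset.mem_filter, hxy])

noncomputable def LL : List (List (Fin n)) := (mins σ).map (cw σ)

noncomputable def ww : List (Fin n) := (LL σ).flatten

lemma mem_ww (x : Fin n) : x ∈ ww σ := by
  rw [ww, List.mem_flatten]
  refine ⟨cw σ (minOf σ x), ?_, ?_⟩
  · rw [LL, List.mem_map]
    exact ⟨minOf σ x, (mem_mins σ _).mpr (minOf_isMin σ x), rfl⟩
  · rw [mem_cw]
    exact (minOf_sameCycle σ x).symm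

lemma sameCycle_of_isMin_eq {x y : Fin n} (hx : IsCycMin σ x) (hy : IsCycMin σ y)
    (h : σ.SameCycle x y) : x = y :=
  le_antisymm (hx y h) (hy x h.symm)

lemma ww_nodup : (ww σ).Nodup := by
  rw [ww, List.nodup_flatten]
  constructor
  · intro l hl
    rw [LL, List.mem_map] at hl
    obtain ⟨m, _, rfl⟩ := hl
    exact cw_nodup σ m
  · rw [LL]
    refine List.Pairwise.map _ (fun a b h => h) ?_
    refine List.Pairwise.imp_of_mem ?_ (mins_nodup σ)
    intro a b ha hb hab
    rw [List.disjoint_left]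
    intro y hya hyb
    rw [mem_cw] at hya hyb
    exact hab (sameCycle_of_isMin_eq σ ((mem_mins σ a).mp ha) ((mem_mins σ b).mp hb)
      (hya.trans hyb.symm))

lemma ww_length : (ww σ).length = n := by
  have h1 : (ww σ).toFinset = Finset.univ := by
    ext x; simp [mem_ww σ x]
  have := List.toFinset_card_of_nodup (ww_nodup σ)
  rw [h1] at this
  simpa using this.symm

noncomputable def barPerm : Equiv.Perm (Fin n) := by
  refine Equiv.ofBijective (fun i => (ww σ).get (Fin.cast (ww_length σ).symm i)) ?_
  rw [Fintype.bijective_iff_injective_and_card]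
  refine ⟨?_, rfl⟩
  intro a b hab
  have := (List.nodup_iff_injective_get).mp (ww_nodup σ) hab
  exact Fin.cast_injective _ this

lemma barPerm_apply (i : Fin n) :
    barPerm σ i = (ww σ).get ⟨(i : ℕ), by rw [ww_length]; exact i.isLt⟩ := rfl


def IsSeg {α : Type*} (l w : List α) (o : ℕ) : Prop :=
  ∃ w₁ w₂ : List α, w = w₁ ++ l ++ w₂ ∧ w₁.length = o

lemma IsSeg.len_le {α : Type*} {l w : List α} {o : ℕ} (h : IsSeg l w o) :
    o + l.length ≤ w.length := by
  obtain ⟨w₁, w₂, rfl, rfl⟩ := h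
  simp

lemma IsSeg.get {α : Type*} {l w : List α} {o : ℕ} (h : IsSeg l w o)
    (r : ℕ) (hr : r < l.length) (hw : o + r < w.length) :
    w.get ⟨o + r, hw⟩ = l.get ⟨r, hr⟩ := by
  obtain ⟨w₁, w₂, rfl, rfl⟩ := h
  rw [List.get_eq_getElem, List.get_eq_getElem]
  have h1 : (w₁.length + r) < (w₁ ++ l).length := by simp; omega
  rw [List.getElem_append_left h1, List.getElem_append_right (by omega)]
  simp


variable {n : ℕ} {σ : Equiv.Perm (Fin n)}

lemma IsCycleWord.get_eq {l : List (Fin n)} (hcw : IsCycleWord σ l) (hne : l ≠ [])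
    (i : ℕ) (hi : i < l.length) : l.get ⟨i, hi⟩ = (σ ^ i) (l.head hne) := by
  obtain ⟨h, hnd, hmin, hch, hlast⟩ := hcw
  induction i with
  | zero =>
    rw [List.get_mk_zero]
    simp
  | succ k ih =>
    have hk : k < l.length := by omega
    have hstep := (List.isChain_iff_getElem.mp hch) k (by omega)
    have ih' := ih hk
    rw [List.get_eq_getElem] at ih'
    rw [List.get_eq_getElem, hstep, ih', pow_succ']
    rfl

lemma IsCycleWord.pow_len {l : List (Fin n)} (hcw : IsCycleWord σ l) (hne : l ≠ []) :
    (σ ^ l.length) (l.head hne) = l.head hne := by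
  obtain ⟨h, hnd, hmin, hch, hlast⟩ := hcw
  have hpos : 0 < l.length := List.length_pos_iff.mpr hne
  have hlg : l.getLast hne = l.get ⟨l.length - 1, by omega⟩ := List.getLast_eq_getElem hne
  have := IsCycleWord.get_eq ⟨h, hnd, hmin, hch, hlast⟩ hne (l.length - 1) (by omega)
  rw [hlg, this] at hlast
  have h2 : σ ((σ ^ (l.length - 1)) (l.head hne)) = (σ ^ l.length) (l.head hne) := by
    show (σ ^ 1) ((σ ^ (l.length - 1)) (l.head hne)) = _
    rw [← Equiv.Perm.mul_apply, ← pow_add]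
    congr 2
    omega
  rw [h2] at hlast
  exact hlast


lemma IsCycleWord.eq_cw {l : List (Fin n)} (hcw : IsCycleWord σ l) (hne : l ≠ []) :
    l = cw σ (l.head hne) ∧ IsCycMin σ (l.head hne) := by
  obtain ⟨h, hnd, hmin, hch, hlast⟩ := hcw
  set m := l.head hne with hm
  have hpos : 0 < l.length := List.length_pos_iff.mpr hne
  have hpp : Function.IsPeriodicPt (⇑σ) l.length m := by
    show (⇑σ)^[l.length] m = m
    exact IsCycleWord.pow_len ⟨h, hnd, hmin, hch, hlast⟩ hne
  have hdvd : Function.minimalPeriod (⇑σ) m ∣ l.length := hpp.minimalPeriod_dvd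
  have hle : l.length ≤ Function.minimalPeriod (⇑σ) m := by
    by_contra hlt
    push_neg at hlt
    have h1 : l.get ⟨Function.minimalPeriod (⇑σ) m, hlt⟩ = l.get ⟨0, hpos⟩ := by
      rw [IsCycleWord.get_eq ⟨h, hnd, hmin, hch, hlast⟩ hne _ hlt,
          IsCycleWord.get_eq ⟨h, hnd, hmin, hch, hlast⟩ hne 0 hpos]
      simp; exact pow_per σ m
    have h2 := List.nodup_iff_injective_get.mp hnd h1
    have h3 := per_pos σ m
    rw [Fin.mk.injEq] at h2
    omega
  have hlen : l.length = Function.minimalPeriod (⇑σ) m :=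
    le_antisymm hle (Nat.le_of_dvd hpos hdvd)
  have hl : l = cw σ m := by
    apply List.ext_get
    · rw [cw_length]; exact hlen
    · intro i h1 h2
      rw [IsCycleWord.get_eq ⟨h, hnd, hmin, hch, hlast⟩ hne i h1, cw_get]
  refine ⟨hl, ?_⟩
  intro y hy
  have hyl : y ∈ cw σ m := (mem_cw σ m y).mpr hy
  rw [← hl] at hyl
  exact hmin y hyl

lemma isCycleWord_cw {m : Fin n} (hm : IsCycMin σ m) : IsCycleWord σ (cw σ m) := by
  refine ⟨cw_ne_nil σ m, cw_nodup σ m, ?_, cw_chain' σ m, cw_getLast σ m⟩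
  intro x hx
  rw [cw_head]
  exact hm x ((mem_cw σ m x).mp hx)

lemma mem_LL {l : List (Fin n)} (hl : l ∈ LL σ) : ∃ m, IsCycMin σ m ∧ l = cw σ m := by
  rw [LL, List.mem_map] at hl
  obtain ⟨m, hm, rfl⟩ := hl
  exact ⟨m, (mem_mins σ m).mp hm, rfl⟩

lemma mem_LL_isCycleWord {l : List (Fin n)} (hl : l ∈ LL σ) : IsCycleWord σ l := by
  obtain ⟨m, hm, rfl⟩ := mem_LL hl
  exact isCycleWord_cw hm

lemma LL_chain' : (LL σ).Chain' (fun a b =>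
    ∃ (h₁ : a ≠ []) (h₂ : b ≠ []), b.head h₂ < a.head h₁) := by
  rw [LL, List.Chain', List.isChain_map]
  refine List.IsChain.imp ?_ (mins_chain' σ)
  intro a b hab
  exact ⟨cw_ne_nil σ a, cw_ne_nil σ b, by rw [cw_head, cw_head]; exact hab⟩

lemma mem_LL_seg {l : List (Fin n)} (hl : l ∈ LL σ) : ∃ o, IsSeg l (ww σ) o := by
  rw [LL, List.mem_map] at hl
  obtain ⟨m, hm, rfl⟩ := hl
  obtain ⟨s, t, hst⟩ := List.append_of_mem hm
  refine ⟨((s.map (cw σ)).flatten).length, (s.map (cw σ)).flatten,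
    ((t.map (cw σ)).flatten), ?_, rfl⟩
  rw [ww, LL, hst]
  simp [List.flatten_append]

lemma helper_lt {α : Type*} [LinearOrder α] {a b c : List α} {t s : List α}
    (hw : a ++ (c ++ t) = b ++ s)
    (ha : a ≠ []) (hb : b ≠ []) (hc : c ≠ [])
    (hbmin : ∀ x ∈ b, b.head hb ≤ x)
    (hlt : c.head hc < a.head ha)
    (hab : a.length < b.length) : False := by
  have hapos : 0 < a.length := List.length_pos_iff.mpr ha
  have hcpos : 0 < c.length := List.length_pos_iff.mpr hc
  have hlen : a.length < (a ++ (c ++ t)).length := by simp; omega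
  have e1 : (a ++ (c ++ t))[a.length]'hlen = c.head hc := by
    rw [List.getElem_append_right (le_refl a.length)]
    simp
    rw [List.getElem_append_left hcpos]
    exact List.getElem_zero hcpos
  have e2 : (a ++ (c ++ t))[a.length]'hlen = b[a.length]'hab := by
    simp_rw [hw]
    rw [List.getElem_append_left hab]
  have e3 : (a ++ (c ++ t))[0]'(by omega) = a.head ha := by
    rw [List.getElem_append_left hapos]
    exact List.getElem_zero hapos
  have e4 : (a ++ (c ++ t))[0]'(by omega) = b.head hb := by
    simp_rw [hw]
    rw [List.getElem_append_left (List.length_pos_iff.mpr hb)]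
    exact List.getElem_zero (List.length_pos_iff.mpr hb)
  have e5 : b.head hb ≤ b[a.length]'hab := hbmin _ (List.getElem_mem _)
  rw [← e4, e3, ← e2, e1] at e5
  exact absurd (lt_of_le_of_lt e5 hlt) (lt_irrefl _)

lemma flatten_unique {α : Type*} [LinearOrder α] :
    ∀ (L M : List (List α)),
    (∀ l ∈ L, l ≠ []) → (∀ l ∈ M, l ≠ []) →
    (∀ l ∈ L, ∀ (h : l ≠ []), ∀ x ∈ l, l.head h ≤ x) →
    (∀ l ∈ M, ∀ (h : l ≠ []), ∀ x ∈ l, l.head h ≤ x) →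
    L.Chain' (fun l₁ l₂ => ∃ (h₁ : l₁ ≠ []) (h₂ : l₂ ≠ []), l₂.head h₂ < l₁.head h₁) →
    M.Chain' (fun l₁ l₂ => ∃ (h₁ : l₁ ≠ []) (h₂ : l₂ ≠ []), l₂.head h₂ < l₁.head h₁) →
    L.flatten = M.flatten → L = M := by
  intro L
  induction L with
  | nil =>
    intro M _ hMne _ _ _ _ hf
    cases M with
    | nil => rfl
    | cons b S =>
      exfalso
      rw [List.flatten_nil, List.flatten_cons] at hf
      have hh := hMne b (by simp)
      rw [← List.length_pos_iff] at hh
      have hc := congrArg List.length hf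
      simp at hc
      omega
  | cons a T ih =>
    intro M hLne hMne hLmin hMmin hLch hMch hf
    cases M with
    | nil =>
      exfalso
      rw [List.flatten_nil, List.flatten_cons] at hf
      have hh := hLne a (by simp)
      rw [← List.length_pos_iff] at hh
      have hc := congrArg List.length hf
      simp only [List.length_append, List.length_nil] at hc
      omega
    | cons b S =>
      rw [List.flatten_cons, List.flatten_cons] at hf
      have ha : a ≠ [] := hLne a (by simp)
      have hb : b ≠ [] := hMne b (by simp)
      have hlen : a.length = b.length := by
        by_contra hne
        rcases Nat.lt_or_ge a.length b.length with hab | hab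
        · -- T nonempty
          have hTflat : T.flatten ≠ [] := by
            intro h0
            have := congrArg List.length hf
            rw [h0] at this
            simp at this
            omega
          have hT : T ≠ [] := by rintro rfl; simp at hTflat
          obtain ⟨c, T', rfl⟩ := List.exists_cons_of_ne_nil hT
          have hc : c ≠ [] := hLne c (by simp)
          obtain ⟨h₁, h₂, hlt⟩ := (List.isChain_cons_cons.mp hLch).1
          rw [List.flatten_cons, ← List.append_assoc] at hf
          exact helper_lt (by rw [List.append_assoc] at hf; exact hf) ha hb hc
            (hMmin b (by simp) hb) hlt hab
        · have hab' : b.length < a.length := by omega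
          have hSflat : S.flatten ≠ [] := by
            intro h0
            have := congrArg List.length hf
            rw [h0] at this
            simp at this
            omega
          have hS : S ≠ [] := by rintro rfl; simp at hSflat
          obtain ⟨c, S', rfl⟩ := List.exists_cons_of_ne_nil hS
          have hc : c ≠ [] := hMne c (by simp)
          obtain ⟨h₁, h₂, hlt⟩ := (List.isChain_cons_cons.mp hMch).1
          exact helper_lt (by rw [List.flatten_cons, ← List.append_assoc, List.append_assoc] at hf; exact hf.symm) hb ha hc
            (hLmin a (by simp) ha) hlt hab'
      obtain ⟨hab, htail⟩ := List.append_inj hf hlen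
      subst hab
      have : T = S := by
        refine ih S (fun l hl => hLne l (by simp [hl])) (fun l hl => hMne l (by simp [hl]))
          (fun l hl => hLmin l (by simp [hl])) (fun l hl => hMmin l (by simp [hl]))
          hLch.tail hMch.tail htail
      rw [this]

lemma chain_agree {σ σ' : Equiv.Perm (Fin n)} : ∀ (l : List (Fin n)),
    l.Chain' (fun x y => y = σ x) → l.Chain' (fun x y => y = σ' x) →
    (∀ h : l ≠ [], σ (l.getLast h) = σ' (l.getLast h)) →
    ∀ x ∈ l, σ x = σ' x := by
  intro l
  induction l with
  | nil => simp
  | cons a t ih =>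
    intro h1 h2 h3 x hx
    cases t with
    | nil =>
      simp only [List.mem_singleton] at hx
      subst hx
      simpa using h3 (by simp)
    | cons b t' =>
      unfold List.Chain' at h1 h2
      rw [List.isChain_cons_cons] at h1 h2
      rcases List.mem_cons.mp hx with rfl | hx'
      · rw [← h1.1, ← h2.1]
      · refine ih h1.2 h2.2 ?_ x hx'
        intro h
        have := h3 (by simp)
        rwa [List.getLast_cons h] at this

lemma barPerm_injective : Function.Injective (barPerm (n := n)) := by
  intro σ σ' h
  have hww : ww σ = ww σ' := by
    apply List.ext_get (by rw [ww_length, ww_length])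
    intro i h1 h2
    have hi : i < n := by rwa [ww_length] at h1
    have := congrFun (congrArg (fun (e : Equiv.Perm (Fin n)) => e.toFun) h) ⟨i, hi⟩
    simpa [barPerm_apply] using this
  have props : ∀ (σ₀ : Equiv.Perm (Fin n)),
      (∀ l ∈ LL σ₀, l ≠ []) ∧
      (∀ l ∈ LL σ₀, ∀ (h : l ≠ []), ∀ x ∈ l, l.head h ≤ x) := by
    intro σ₀
    constructor
    · intro l hl
      obtain ⟨hne, _⟩ := mem_LL_isCycleWord hl
      exact hne
    · intro l hl h x hx
      obtain ⟨hne, _, hmin, _⟩ := mem_LL_isCycleWord hl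
      exact hmin x hx
  have hLL : LL σ = LL σ' := by
    refine flatten_unique _ _ (props σ).1 (props σ').1 (props σ).2 (props σ').2
      (LL_chain' (σ := σ)) (LL_chain' (σ := σ')) hww
  ext x
  have hxw : x ∈ ww σ := mem_ww σ x
  rw [ww, List.mem_flatten] at hxw
  obtain ⟨l, hlmem, hxl⟩ := hxw
  obtain ⟨hne1, _, _, hch1, hlast1⟩ := mem_LL_isCycleWord hlmem
  obtain ⟨hne2, _, _, hch2, hlast2⟩ := mem_LL_isCycleWord (hLL ▸ hlmem : l ∈ LL σ')
  exact congrArg Fin.val (chain_agree l hch1 hch2 (fun hh => by rw [hlast1, hlast2]) x hxl)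

lemma seg_find {α : Type*} [LinearOrder α] :
    ∀ (L : List (List α)),
    (∀ l ∈ L, l ≠ []) →
    (∀ l ∈ L, ∀ (h : l ≠ []), ∀ x ∈ l, l.head h ≤ x) →
    L.Chain' (fun l₁ l₂ => ∃ (h₁ : l₁ ≠ []) (h₂ : l₂ ≠ []), l₂.head h₂ < l₁.head h₁) →
    ∀ (i j : ℕ), 0 < j → i + j ≤ L.flatten.length →
    (∀ s : ℕ, 0 < s → s < j → ∀ (h1 : i < L.flatten.length) (h2 : i + s < L.flatten.length),
      L.flatten[i]'h1 < L.flatten[i+s]'h2) →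
    ∃ l ∈ L, ∃ o, o ≤ i ∧ i + j ≤ o + l.length ∧ IsSeg l L.flatten o := by
  intro L
  induction L with
  | nil =>
    intro _ _ _ i j hj hij _
    simp at hij
    omega
  | cons a T ih =>
    intro hne hmin hch i j hj hij hwin
    have hijfl : i + j ≤ a.length + T.flatten.length := by
      simpa only [List.flatten_cons, List.length_append] using hij
    by_cases hcase1 : i + j ≤ a.length
    · exact ⟨a, by simp, 0, by omega, by omega, [], T.flatten, by simp, rfl⟩
    by_cases hcase2 : a.length ≤ i
    · have hij' : (i - a.length) + j ≤ T.flatten.length := by omega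
      have hwin' : ∀ s : ℕ, 0 < s → s < j →
          ∀ (h1 : i - a.length < T.flatten.length)
            (h2 : (i - a.length) + s < T.flatten.length),
          T.flatten[i - a.length]'h1 < T.flatten[(i - a.length) + s]'h2 := by
        intro s hs hsj h1 h2
        have hb1 : i < (a ++ T.flatten).length := by
          simp only [List.length_append]; omega
        have hb2 : i + s < (a ++ T.flatten).length := by
          simp only [List.length_append]; omega
        have e1 : (a ++ T.flatten)[i]'hb1 = T.flatten[i - a.length]'h1 := by
          rw [List.getElem_append_right hcase2]
        have e2 : (a ++ T.flatten)[i + s]'hb2 = T.flatten[(i - a.length) + s]'h2 := by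
          rw [List.getElem_append_right (by omega)]
          congr 1
          omega
        rw [← e1, ← e2]
        exact hwin s hs hsj hb1 hb2
      obtain ⟨l, hl, o, ho1, ho2, w₁, w₂, hseg, hw1len⟩ :=
        ih (fun l hl => hne l (by simp [hl])) (fun l hl => hmin l (by simp [hl])) hch.tail
          (i - a.length) j hj hij' hwin'
      refine ⟨l, by simp [hl], a.length + o, by omega, by omega,
        a ++ w₁, w₂, ?_, by simp [hw1len]⟩
      show a ++ T.flatten = (a ++ w₁) ++ l ++ w₂
      rw [hseg]
      simp [List.append_assoc]
    · exfalso
      push_neg at hcase1 hcase2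
      have hTflat : T.flatten ≠ [] := by
        intro h0
        rw [h0] at hijfl
        simp at hijfl
        omega
      have hT : T ≠ [] := by rintro rfl; simp at hTflat
      obtain ⟨c, T', rfl⟩ := List.exists_cons_of_ne_nil hT
      have hc : c ≠ [] := hne c (by simp)
      have hcpos : 0 < c.length := List.length_pos_iff.mpr hc
      obtain ⟨h₁, h₂, hlt⟩ := (List.isChain_cons_cons.mp hch).1
      have ha : a ≠ [] := hne a (by simp)
      set s₀ := a.length - i with hs0
      have hs0pos : 0 < s₀ := by omega
      have hs0lt : s₀ < j := by omega
      have hb1 : i < (a ++ (c ++ T'.flatten)).length := by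
        simp only [List.length_append]; omega
      have hb2 : i + s₀ < (a ++ (c ++ T'.flatten)).length := by
        simp only [List.length_append]; omega
      have e1 : (a ++ (c ++ T'.flatten))[i + s₀]'hb2 = c.head h₂ := by
        have his : i + s₀ = a.length := by omega
        simp_rw [his]
        rw [List.getElem_append_right (le_refl _)]
        have hz : a.length - a.length = 0 := by omega
        simp_rw [hz]
        rw [List.getElem_append_left hcpos]
        exact List.getElem_zero _
      have e2 : (a ++ (c ++ T'.flatten))[i]'hb1 = a[i]'hcase2 :=
        List.getElem_append_left hcase2
      have e3 : a.head ha ≤ a[i]'hcase2 := hmin a (by simp) ha _ (List.getElem_mem _)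
      have hwi : (a ++ (c ++ T'.flatten))[i]'hb1 < (a ++ (c ++ T'.flatten))[i + s₀]'hb2 :=
        hwin s₀ hs0pos hs0lt hb1 hb2
      rw [e1, e2] at hwi
      exact absurd (lt_trans (lt_of_le_of_lt e3 hwi) hlt) (lt_irrefl _)

lemma get_congr {α : Type*} {l : List α} {i k : ℕ} (h : i = k)
    (hi : i < l.length) (hk : k < l.length) : l.get ⟨i, hi⟩ = l.get ⟨k, hk⟩ := by
  subst h; rfl

lemma cycle_to_lin {j : ℕ} (hj : 0 < j) (τ : Equiv.Perm (Fin j)) (hτ : τ ⟨0, hj⟩ = ⟨0, hj⟩)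
    {σ : Equiv.Perm (Fin n)} (h : HasCycleMatch σ τ) : HasLinMatch (barPerm σ) τ := by
  obtain ⟨l, hcyc, hl, hjl, r, hmatch⟩ := h
  have hppos : 0 < l.length := List.length_pos_iff.mpr hl
  set p := l.length with hp
  set r' := r % p with hr'
  have hr'lt : r' < p := Nat.mod_lt _ hppos
  obtain ⟨hne0, hnd, hmin, hch, hlast⟩ := hcyc
  have htau_pos : ∀ s : Fin j, (s : ℕ) ≠ 0 → τ ⟨0, hj⟩ < τ s := by
    intro s hs
    have h1 : τ s ≠ ⟨0, hj⟩ := by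
      intro he
      exact hs (congrArg Fin.val (τ.injective (he.trans hτ.symm)))
    rw [hτ]
    rw [Fin.lt_def]
    exact Nat.pos_of_ne_zero (fun h0 => h1 (Fin.ext h0))
  have hkey : r' + j ≤ p := by
    by_contra hgt
    push_neg at hgt
    have hr'pos : 0 < r' := by omega
    have hs2 : p - r' < j := by omega
    set s₀ : Fin j := ⟨p - r', hs2⟩ with hs0
    have hmod0 : (r + (s₀ : ℕ)) % p = 0 := by
      show (r + (p - r')) % p = 0
      conv_lhs => rw [← Nat.mod_add_mod]
      rw [← hr']
      have : r' + (p - r') = p := by omega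
      rw [this, Nat.mod_self]
    have hmodr : (r + ((⟨0, hj⟩ : Fin j) : ℕ)) % p = r' := by
      show (r + 0) % p = r'
      rw [Nat.add_zero]
    have hget0 : l.get ⟨(r + (s₀ : ℕ)) % p, Nat.mod_lt _ hppos⟩ = l.head hl := by
      rw [get_congr hmod0 _ hppos, List.get_mk_zero]
    have hgetr : l.get ⟨(r + ((⟨0, hj⟩ : Fin j) : ℕ)) % p, Nat.mod_lt _ hppos⟩ =
        l.get ⟨r', hr'lt⟩ := get_congr hmodr _ _
    have hlt1 : l.head hl < l.get ⟨r', hr'lt⟩ := by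
      refine lt_of_le_of_ne (hmin _ (List.get_mem l _)) ?_
      intro he
      have h0 : l.get ⟨0, hppos⟩ = l.get ⟨r', hr'lt⟩ := by
        rw [List.get_mk_zero]; exact he
      have := List.nodup_iff_injective_get.mp hnd h0
      rw [Fin.mk.injEq] at this
      omega
    have hiff := hmatch ⟨0, hj⟩ s₀
    rw [hgetr, hget0] at hiff
    have := hiff.mpr (htau_pos s₀ (by simp [hs0]; omega))
    exact absurd (lt_trans this hlt1) (lt_irrefl _)
  obtain ⟨hlcw, hmmin⟩ := IsCycleWord.eq_cw ⟨hne0, hnd, hmin, hch, hlast⟩ hl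
  have hlmem : l ∈ LL σ := by
    rw [LL, List.mem_map]
    exact ⟨l.head hl, (mem_mins σ _).mpr hmmin, hlcw.symm⟩
  obtain ⟨o, hseg⟩ := mem_LL_seg hlmem
  have hwwlen : (ww σ).length = n := ww_length σ
  have hlen_le : o + p ≤ n := by
    have := hseg.len_le
    omega
  refine ⟨o + r', by omega, ?_⟩
  intro s t
  have key : ∀ s : Fin j, ∀ (hb : o + r' + (s : ℕ) < n),
      barPerm σ ⟨o + r' + (s : ℕ), hb⟩ =
      l.get ⟨(r + (s : ℕ)) % p, Nat.mod_lt _ hppos⟩ := by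
    intro s hb
    rw [barPerm_apply]
    have hrs : r' + (s : ℕ) < p := by have := s.isLt; omega
    have e1 : (ww σ).get ⟨o + (r' + (s : ℕ)), by rw [hwwlen]; omega⟩ =
        l.get ⟨r' + (s : ℕ), hrs⟩ := hseg.get _ hrs _
    have e2 : (r + (s : ℕ)) % p = r' + (s : ℕ) := by
      conv_lhs => rw [← Nat.mod_add_mod, ← hr']
      exact Nat.mod_eq_of_lt hrs
    rw [get_congr (Nat.add_assoc o r' (s : ℕ)) _ (by rw [hwwlen]; omega), e1,
      get_congr e2.symm _ _]
  rw [key s _, key t _]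
  exact hmatch s t

lemma lin_to_cycle {j : ℕ} (hj : 0 < j) (τ : Equiv.Perm (Fin j)) (hτ : τ ⟨0, hj⟩ = ⟨0, hj⟩)
    {σ : Equiv.Perm (Fin n)} (h : HasLinMatch (barPerm σ) τ) : HasCycleMatch σ τ := by
  obtain ⟨i, hijn, hmatch⟩ := h
  have hwwlen : (ww σ).length = n := ww_length σ
  have htau_pos : ∀ s : Fin j, (s : ℕ) ≠ 0 → τ ⟨0, hj⟩ < τ s := by
    intro s hs
    have h1 : τ s ≠ ⟨0, hj⟩ := by
      intro he
      exact hs (congrArg Fin.val (τ.injective (he.trans hτ.symm)))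
    rw [hτ, Fin.lt_def]
    exact Nat.pos_of_ne_zero (fun h0 => h1 (Fin.ext h0))
  have hbar : ∀ (k : ℕ) (hb : k < n), barPerm σ ⟨k, hb⟩ =
      (ww σ).get ⟨k, by rw [hwwlen]; exact hb⟩ := fun k hb => barPerm_apply σ _
  have props : (∀ l ∈ LL σ, l ≠ []) ∧
      (∀ l ∈ LL σ, ∀ (h : l ≠ []), ∀ x ∈ l, l.head h ≤ x) := by
    constructor
    · intro l hl
      obtain ⟨hne, _⟩ := mem_LL_isCycleWord hl
      exact hne
    · intro l hl hh x hx
      obtain ⟨hne, _, hmin, _⟩ := mem_LL_isCycleWord hl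
      exact hmin x hx
  have hwin : ∀ s : ℕ, 0 < s → s < j →
      ∀ (h1 : i < (LL σ).flatten.length) (h2 : i + s < (LL σ).flatten.length),
      (LL σ).flatten[i]'h1 < (LL σ).flatten[i+s]'h2 := by
    intro s hs hsj h1 h2
    have hiff := hmatch ⟨0, hj⟩ ⟨s, hsj⟩
    have e0 : barPerm σ ⟨i + ((⟨0, hj⟩ : Fin j) : ℕ), by omega⟩ =
        (ww σ).get ⟨i, by rw [hwwlen]; omega⟩ := by
      rw [hbar _ (by omega)]
      exact get_congr (by simp) _ _
    have e1 : barPerm σ ⟨i + ((⟨s, hsj⟩ : Fin j) : ℕ), by omega⟩ =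
        (ww σ).get ⟨i + s, by rw [hwwlen]; omega⟩ := by
      rw [hbar _ (by omega)]
    rw [e0, e1] at hiff
    exact hiff.mpr (htau_pos ⟨s, hsj⟩ (by simp; omega))
  obtain ⟨l, hlmem, o, ho1, ho2, hseg⟩ :=
    seg_find (LL σ) props.1 props.2 (LL_chain' (σ := σ)) i j hj
      (by show i + j ≤ (ww σ).length; omega) hwin
  have hcyc : IsCycleWord σ l := mem_LL_isCycleWord hlmem
  have hne : l ≠ [] := hcyc.choose
  have hppos : 0 < l.length := List.length_pos_iff.mpr hne
  have hjlen : j ≤ l.length := by omega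
  refine ⟨l, hcyc, hne, hjlen, i - o, ?_⟩
  intro s t
  have key : ∀ s : Fin j, ∀ (hb : ((i - o) + (s : ℕ)) % l.length < l.length),
      l.get ⟨((i - o) + (s : ℕ)) % l.length, hb⟩ =
      barPerm σ ⟨i + (s : ℕ), by have := s.isLt; omega⟩ := by
    intro s hb
    have hrs : (i - o) + (s : ℕ) < l.length := by have := s.isLt; omega
    have e2 : ((i - o) + (s : ℕ)) % l.length = (i - o) + (s : ℕ) := Nat.mod_eq_of_lt hrs
    rw [get_congr e2 _ hrs]
    have e1 : (ww σ).get ⟨o + ((i - o) + (s : ℕ)), by rw [hwwlen]; have := s.isLt; omega⟩ =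
        l.get ⟨(i - o) + (s : ℕ), hrs⟩ := hseg.get _ hrs _
    rw [← e1, hbar _ (by have := s.isLt; omega)]
    exact get_congr (by omega) _ _
  rw [key s _, key t _]
  exact hmatch s t

end Foata

/-- If `τ ∈ S_j` starts with `1` (0-based: `τ 0 = 0`), then the number of
permutations of `S_n` with no cycle `τ`-match equals the number of permutations
of `S_n` with no `τ`-match: `ncmS_n(τ) = nmS_n(τ)`. -/
theorem stmt6 {n j : ℕ} (hj : 0 < j) (τ : Equiv.Perm (Fin j))
    (hτ : τ ⟨0, hj⟩ = ⟨0, hj⟩) :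
    Nat.card {σ : Equiv.Perm (Fin n) // ¬ HasCycleMatch σ τ} =
      Nat.card {σ : Equiv.Perm (Fin n) // ¬ HasLinMatch σ τ} := by
  have hbij : Function.Bijective (Foata.barPerm (n := n)) :=
    Finite.injective_iff_bijective.mp Foata.barPerm_injective
  refine Nat.card_congr (Equiv.subtypeEquiv (Equiv.ofBijective _ hbij) ?_)
  intro σ
  apply not_congr
  exact ⟨Foata.cycle_to_lin hj τ hτ, Foata.lin_to_cycle hj τ hτ⟩
end

section
/- For any pattern τ ∈ S_j and any σ ∈ S_n, σ has a cycle τ-match if and only if the cycle-reverse σ^{cr} has a cycle τ^r-match, where τ^r is the reverse of τ. Consequently ncmS_n(τ) = ncmS_n(τ^r) for all n. -/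
namespace Stmt8Aux

def rc {α : Type*} : List α → List α
  | [] => []
  | a :: t => a :: t.reverse

@[simp] lemma rc_length {α : Type*} (l : List α) : (rc l).length = l.length := by
  cases l <;> simp [rc]

lemma rc_ne_nil {α : Type*} {l : List α} (h : l ≠ []) : rc l ≠ [] := by
  cases l <;> simp [rc] at h ⊢

lemma rc_mem {α : Type*} {l : List α} {x : α} : x ∈ rc l ↔ x ∈ l := by
  cases l <;> simp [rc]

lemma rc_nodup {α : Type*} {l : List α} (h : l.Nodup) : (rc l).Nodup := by
  cases l with
  | nil => simp [rc]
  | cons a t =>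
    simp only [rc, List.nodup_cons, List.nodup_reverse, List.mem_reverse] at *
    exact h

lemma rc_head {α : Type*} {l : List α} (h : l ≠ []) (h' : rc l ≠ []) :
    (rc l).head h' = l.head h := by
  cases l with
  | nil => simp at h
  | cons a t => simp [rc]

lemma rc_get {α : Type*} (l : List α) (k : ℕ) (hk : k < (rc l).length)
    (hk2 : (l.length - k) % l.length < l.length) :
    (rc l).get ⟨k, hk⟩ = l.get ⟨(l.length - k) % l.length, hk2⟩ := by
  cases l with
  | nil => simp at hk2
  | cons a t =>
    simp only [rc, List.length_cons] at hk ⊢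
    cases k with
    | zero =>
      simp only [Nat.sub_zero, Nat.mod_self]
      rfl
    | succ k =>
      have hkt : k < t.length := by simpa [rc] using hk
      have h1 : (t.length + 1 - (k + 1)) % (t.length + 1) = t.length - k := by
        rw [Nat.mod_eq_of_lt (by omega)]
        omega
      simp only [h1, List.get_eq_getElem, List.getElem_cons_succ]
      rw [List.getElem_reverse]
      obtain ⟨i, hi⟩ : ∃ i, t.length - k = i + 1 := ⟨t.length - k - 1, by omega⟩
      simp only [hi, List.getElem_cons_succ]
      congr 1
      omega

lemma step_of_cw {n : ℕ} (σ : Equiv.Perm (Fin n)) {l : List (Fin n)} (h : IsCycleWord σ l)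
    (k : ℕ) (hk : k < l.length) (hk1 : (k + 1) % l.length < l.length) :
    σ (l.get ⟨k, hk⟩) = l.get ⟨(k + 1) % l.length, hk1⟩ := by
  obtain ⟨hne, hnd, hmin, hch, hlast⟩ := h
  rcases Nat.lt_or_ge (k + 1) l.length with h1 | h1
  · have hc := List.isChain_iff_getElem.mp hch k (by omega)
    have h2 : (k + 1) % l.length = k + 1 := Nat.mod_eq_of_lt h1
    simp only [h2]
    exact hc.symm
  · have hkl : k = l.length - 1 := by omega
    have h2 : (k + 1) % l.length = 0 := by
      have : k + 1 = l.length := by omega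
      rw [this, Nat.mod_self]
    simp only [h2]
    have hgl : l.getLast hne = l.get ⟨k, hk⟩ := by
      rw [List.getLast_eq_getElem]; simp [hkl]
    have hhd : l.head hne = l.get ⟨0, by omega⟩ := by
      simp [List.head_eq_getElem, List.get_eq_getElem]
    rw [← hgl, hlast, hhd]

lemma rc_isCycleWord {n : ℕ} (σ : Equiv.Perm (Fin n)) {l : List (Fin n)}
    (h : IsCycleWord σ l) : IsCycleWord σ⁻¹ (rc l) := by
  obtain ⟨hne, hnd, hmin, hch, hlast⟩ := h
  have h' : IsCycleWord σ l := ⟨hne, hnd, hmin, hch, hlast⟩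
  have hp : 0 < l.length := List.length_pos_iff.mpr hne
  refine ⟨rc_ne_nil hne, rc_nodup hnd, ?_, ?_, ?_⟩
  · intro x hx
    rw [rc_head hne]
    exact hmin x (rc_mem.mp hx)
  · apply List.isChain_iff_getElem.mpr
    intro i hi
    show (rc l).get ⟨i + 1, hi⟩ = σ⁻¹ ((rc l).get ⟨i, by omega⟩)
    have hi' : i < l.length - 1 := by simp at hi; omega
    rw [rc_get l i (by simp; omega) (Nat.mod_lt _ hp),
        rc_get l (i + 1) (by simp; omega) (Nat.mod_lt _ hp)]
    have e1 : (l.length - (i + 1)) % l.length = l.length - i - 1 := by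
      rw [Nat.mod_eq_of_lt (by omega)]; omega
    show l.get _ = σ.symm (l.get _)
    rw [Equiv.eq_symm_apply]
    have := step_of_cw σ h' (l.length - i - 1) (by omega) (Nat.mod_lt _ hp)
    have e2 : l.length - i - 1 + 1 = l.length - i := by omega
    rw [e2] at this
    rw [show (⟨(l.length - (i+1)) % l.length, Nat.mod_lt _ hp⟩ : Fin l.length)
        = ⟨l.length - i - 1, by omega⟩ from Fin.ext e1]
    exact this
  · have hL : (rc l).getLast (rc_ne_nil hne) =
        (rc l).get ⟨(rc l).length - 1, by simp; omega⟩ := List.getLast_eq_getElem _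
    have hH : (rc l).head (rc_ne_nil hne) = l.head hne := rc_head hne _
    rw [hL, hH]
    rw [rc_get l ((rc l).length - 1) (by simp; omega) (Nat.mod_lt _ hp)]
    show σ.symm (l.get _) = _
    rw [Equiv.symm_apply_eq]
    have e1 : (l.length - ((rc l).length - 1)) % l.length = 1 % l.length := by
      simp only [rc_length]
      congr 1
      omega
    have hstep := step_of_cw σ h' 0 hp (Nat.mod_lt _ hp)
    have hhd : l.head hne = l.get ⟨0, hp⟩ := by
      simp [List.head_eq_getElem, List.get_eq_getElem]
    rw [hhd, hstep]
    congr 1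
    exact Fin.ext (by simpa using e1)

lemma idx_eq (p m s : ℕ) (hp : 0 < p) (hs : s ≤ m) (hsp : s < p) :
    (p - (p - m % p + s) % p) % p = (m - s) % p := by
  obtain ⟨q, a, hap, rfl⟩ : ∃ q a, a < p ∧ m = p * q + a :=
    ⟨m / p, m % p, Nat.mod_lt _ hp, by have := Nat.div_add_mod m p; omega⟩
  have hmod : (p * q + a) % p = a := by
    rw [Nat.mul_add_mod, Nat.mod_eq_of_lt hap]
  rw [hmod]
  rcases lt_trichotomy s a with hlt | heq | hgt
  · have e1 : (p - a + s) % p = p - a + s := Nat.mod_eq_of_lt (by omega)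
    rw [e1]
    have e2 : p - (p - a + s) = a - s := by omega
    rw [e2, Nat.mod_eq_of_lt (by omega)]
    have e3 : p * q + a - s = p * q + (a - s) := by omega
    rw [e3, Nat.mul_add_mod, Nat.mod_eq_of_lt (by omega)]
  · subst heq
    have e1 : p - s + s = p := by omega
    rw [e1, Nat.mod_self, Nat.sub_zero, Nat.mod_self]
    have e3 : p * q + s - s = p * q := by omega
    rw [e3, Nat.mul_mod_right]
  · have e1 : (p - a + s) % p = s - a := by
      rw [show p - a + s = p + (s - a) from by omega, Nat.add_mod_left]
      exact Nat.mod_eq_of_lt (by omega)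
    rw [e1, Nat.mod_eq_of_lt (show p - (s - a) < p by omega)]
    have hq1 : 1 ≤ q := by
      rcases Nat.eq_zero_or_pos q with h0 | h1
      · subst h0
        simp only [Nat.mul_zero, Nat.zero_add] at hs
        omega
      · exact h1
    have hmul : p * (q - 1) = p * q - p := by
      rw [Nat.mul_sub, Nat.mul_one]
    have hple : p * 1 ≤ p * q := Nat.mul_le_mul_left p hq1
    rw [Nat.mul_one] at hple
    have e3 : p * q + a - s = p * (q - 1) + (p - (s - a)) := by omega
    rw [e3, Nat.mul_add_mod, Nat.mod_eq_of_lt (show p - (s - a) < p by omega)]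

lemma hcm_rc {n j : ℕ} (σ : Equiv.Perm (Fin n)) (τ : Equiv.Perm (Fin j))
    (h : HasCycleMatch σ τ) : HasCycleMatch σ⁻¹ (Fin.revPerm.trans τ) := by
  obtain ⟨l, hcw, hl, hjl, r, hm⟩ := h
  have hp : 0 < l.length := List.length_pos_iff.mpr hl
  refine ⟨rc l, rc_isCycleWord σ hcw, rc_ne_nil hl, by simpa using hjl,
    l.length - (r + (j - 1)) % l.length, ?_⟩
  intro s t
  have hj : 0 < j := s.pos
  have key : ∀ (u : Fin j)
      (h1 : (l.length - (r + (j - 1)) % l.length + (u : ℕ)) % (rc l).length < (rc l).length)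
      (h2 : (r + ((Fin.rev u) : ℕ)) % l.length < l.length),
      (rc l).get ⟨(l.length - (r + (j - 1)) % l.length + (u : ℕ)) % (rc l).length, h1⟩ =
      l.get ⟨(r + ((Fin.rev u) : ℕ)) % l.length, h2⟩ := by
    intro u h1 h2
    rw [rc_get l _ h1 (Nat.mod_lt _ hp)]
    congr 1
    apply Fin.ext
    show (l.length - (l.length - (r + (j - 1)) % l.length + (u : ℕ)) % (rc l).length)
        % l.length = (r + ((Fin.rev u) : ℕ)) % l.length
    simp only [rc_length]
    have hu : (u : ℕ) ≤ r + (j - 1) := by have := u.isLt; omega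
    have hup : (u : ℕ) < l.length := by have := u.isLt; omega
    rw [idx_eq l.length (r + (j - 1)) (u : ℕ) hp hu hup]
    congr 1
    rw [Fin.val_rev]
    have := u.isLt
    omega
  rw [key s (Nat.mod_lt _ (List.length_pos_iff.mpr (rc_ne_nil hl))) (Nat.mod_lt _ hp),
      key t (Nat.mod_lt _ (List.length_pos_iff.mpr (rc_ne_nil hl))) (Nat.mod_lt _ hp)]
  simpa [Equiv.trans_apply] using hm (Fin.rev s) (Fin.rev t)

lemma rev_rev {j : ℕ} (τ : Equiv.Perm (Fin j)) :
    Fin.revPerm.trans (Fin.revPerm.trans τ) = τ := by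
  ext x
  simp [Equiv.trans_apply, Fin.rev_rev]

lemma hcm_iff {n j : ℕ} (σ : Equiv.Perm (Fin n)) (τ : Equiv.Perm (Fin j)) :
    HasCycleMatch σ τ ↔ HasCycleMatch σ⁻¹ (Fin.revPerm.trans τ) := by
  constructor
  · exact hcm_rc σ τ
  · intro h
    have := hcm_rc σ⁻¹ (Fin.revPerm.trans τ) h
    rwa [inv_inv, rev_rev] at this

end Stmt8Aux

/-- For any `τ ∈ S_j` and `σ ∈ S_n`: `σ` has a cycle `τ`-match iff the cycle-reverse
`σ^{cr}` (reversing each cycle, which is exactly `σ⁻¹`) has a cycle `τʳ`-match, where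
`τʳ` is the reverse of `τ` (as a word, `τʳ s = τ (rev s)`, i.e. `Fin.revPerm.trans τ`).
Consequently `ncmS_n(τ) = ncmS_n(τʳ)`. -/
theorem stmt8 {n j : ℕ} (τ : Equiv.Perm (Fin j)) :
    (∀ σ : Equiv.Perm (Fin n),
      HasCycleMatch σ τ ↔ HasCycleMatch σ⁻¹ (Fin.revPerm.trans τ)) ∧
    Nat.card {σ : Equiv.Perm (Fin n) // ¬ HasCycleMatch σ τ} =
      Nat.card {σ : Equiv.Perm (Fin n) // ¬ HasCycleMatch σ (Fin.revPerm.trans τ)} := by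
  refine ⟨fun σ => Stmt8Aux.hcm_iff σ τ, ?_⟩
  exact Nat.card_congr (Equiv.subtypeEquiv (Equiv.inv (Equiv.Perm (Fin n)))
    (fun σ => not_congr (Stmt8Aux.hcm_iff σ τ)))
end

section
/- For every m ≥ 3 and every τ ∈ S_3, the number of m-cycles in S_m that cycle-avoid τ equals 1; together with the values 1 for m = 1 and m = 2, this gives L_m^{ca}(τ) = 1 for all m ≥ 1 and all τ ∈ S_3. -/
namespace Stmt12Aux

variable {m : ℕ}

def CycInc (x y z : Fin m) : Prop :=
  (x < y ∧ y < z) ∨ (y < z ∧ z < x) ∨ (z < x ∧ x < y)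

def CycDec (x y z : Fin m) : Prop :=
  (y < x ∧ z < y) ∨ (z < y ∧ x < z) ∨ (x < z ∧ y < x)

/-- The periodic word of the permutation. -/
def gw (hm : 0 < m) (c : Equiv.Perm (Fin m)) (n : ℕ) : Fin m :=
  c ⟨n % m, Nat.mod_lt _ hm⟩

def Pinc (hm : 0 < m) (c : Equiv.Perm (Fin m)) : Prop :=
  ∃ r i1 i2 : ℕ, 0 < i1 ∧ i1 < i2 ∧ i2 ≤ m - 1 ∧
    CycInc (gw hm c r) (gw hm c (r + i1)) (gw hm c (r + i2))

def Pdec (hm : 0 < m) (c : Equiv.Perm (Fin m)) : Prop :=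
  ∃ r i1 i2 : ℕ, 0 < i1 ∧ i1 < i2 ∧ i2 ≤ m - 1 ∧
    CycDec (gw hm c r) (gw hm c (r + i1)) (gw hm c (r + i2))

lemma gw_add (hm : 0 < m) (c : Equiv.Perm (Fin m)) (n : ℕ) :
    gw hm c (n + m) = gw hm c n := by
  simp [gw, Nat.add_mod_right]

instance (x y z : Fin m) : Decidable (CycInc x y z) := by unfold CycInc; infer_instance
instance (x y z : Fin m) : Decidable (CycDec x y z) := by unfold CycDec; infer_instance

lemma tau_class : ∀ τ : Equiv.Perm (Fin 3),
    CycInc (τ 0) (τ 1) (τ 2) ∨ CycDec (τ 0) (τ 1) (τ 2) := by decide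

lemma occ_core (hm : 0 < m) (hm3 : 3 ≤ m) {c : Equiv.Perm (Fin m)} {τ : Equiv.Perm (Fin 3)}
    (r a b : ℕ) (ha : 0 < a) (hab : a < b) (hb : b ≤ m - 1)
    (h01 : (gw hm c r < gw hm c (r + a) ↔ τ 0 < τ 1))
    (h12 : (gw hm c (r + a) < gw hm c (r + b) ↔ τ 1 < τ 2))
    (h02 : (gw hm c r < gw hm c (r + b) ↔ τ 0 < τ 2)) :
    HasCyclicWordOcc hm c τ := by
  have key : ∀ p q : ℕ, p < q → q - p < m → gw hm c p ≠ gw hm c q := by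
    intro p q h1 h2 hEq
    have h3 : (⟨p % m, Nat.mod_lt _ hm⟩ : Fin m) = ⟨q % m, Nat.mod_lt _ hm⟩ := c.injective hEq
    have h4 : p % m = q % m := congrArg Fin.val h3
    have h5 : m ∣ q - p := (Nat.modEq_iff_dvd' (le_of_lt h1)).mp h4
    have h6 := Nat.le_of_dvd (by omega) h5
    omega
  have d01 : gw hm c r ≠ gw hm c (r + a) := key _ _ (by omega) (by omega)
  have d12 : gw hm c (r + a) ≠ gw hm c (r + b) := key _ _ (by omega) (by omega)
  have d02 : gw hm c r ≠ gw hm c (r + b) := key _ _ (by omega) (by omega)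
  have t01 : τ 0 ≠ τ 1 := fun h => absurd (τ.injective h) (by decide)
  have t12 : τ 1 ≠ τ 2 := fun h => absurd (τ.injective h) (by decide)
  have t02 : τ 0 ≠ τ 2 := fun h => absurd (τ.injective h) (by decide)
  have rev : ∀ {p q : Fin m} {u v : Fin 3}, p ≠ q → u ≠ v → (p < q ↔ u < v) → (q < p ↔ v < u) := by
    intro p q u v hpq huv h
    constructor
    · intro h'
      rcases lt_or_gt_of_ne huv with h1 | h1
      · exact absurd (h.mpr h1) (lt_asymm h')
      · exact h1
    · intro h'
      rcases lt_or_gt_of_ne hpq with h1 | h1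
      · exact absurd (h.mp h1) (lt_asymm h')
      · exact h1
  refine ⟨by omega, r, ![0, a, b], ?_, ?_, ?_, ?_⟩
  · intro s t hst
    fin_cases s <;> fin_cases t <;> simp_all <;> omega
  · intro s hs
    fin_cases s <;> simp_all
  · intro s
    fin_cases s <;> simp <;> omega
  · have H : ∀ s t : Fin 3,
        (gw hm c (r + ![0, a, b] s) < gw hm c (r + ![0, a, b] t) ↔ τ s < τ t) := by
      intro s t
      fin_cases s <;> fin_cases t <;>
        simp only [Matrix.cons_val_zero, Matrix.cons_val_one, Matrix.head_cons,
          Matrix.cons_val_two, Matrix.tail_cons, Nat.add_zero, Fin.isValue]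
      · exact iff_of_false (lt_irrefl _) (lt_irrefl _)
      · exact h01
      · exact h02
      · exact rev d01 t01 h01
      · exact iff_of_false (lt_irrefl _) (lt_irrefl _)
      · exact h12
      · exact rev d02 t02 h02
      · exact rev d12 t12 h12
      · exact iff_of_false (lt_irrefl _) (lt_irrefl _)
    exact H

lemma occ_to_inc (hm : 0 < m) {c : Equiv.Perm (Fin m)} {τ : Equiv.Perm (Fin 3)}
    (h : HasCyclicWordOcc hm c τ) (hτ : CycInc (τ 0) (τ 1) (τ 2)) : Pinc hm c := by
  obtain ⟨hjm, r, f, hmono, hzero, hle, H⟩ := h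
  have H' : ∀ s t : Fin 3, (gw hm c (r + f s) < gw hm c (r + f t) ↔ τ s < τ t) := H
  have hf0 : f 0 = 0 := hzero 0 rfl
  have h01 : f 0 < f 1 := hmono (by decide)
  have h12 : f 1 < f 2 := hmono (by decide)
  have e0 : gw hm c (r + f 0) = gw hm c r := by rw [hf0, Nat.add_zero]
  refine ⟨r, f 1, f 2, by omega, h12, hle 2, ?_⟩
  rcases hτ with ⟨a, b⟩ | ⟨a, b⟩ | ⟨a, b⟩
  · exact Or.inl ⟨by rw [← e0]; exact (H' 0 1).mpr a, (H' 1 2).mpr b⟩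
  · exact Or.inr (Or.inl ⟨(H' 1 2).mpr a, by rw [← e0]; exact (H' 2 0).mpr b⟩)
  · exact Or.inr (Or.inr ⟨by rw [← e0]; exact (H' 2 0).mpr a, by rw [← e0]; exact (H' 0 1).mpr b⟩)

lemma occ_to_dec (hm : 0 < m) {c : Equiv.Perm (Fin m)} {τ : Equiv.Perm (Fin 3)}
    (h : HasCyclicWordOcc hm c τ) (hτ : CycDec (τ 0) (τ 1) (τ 2)) : Pdec hm c := by
  obtain ⟨hjm, r, f, hmono, hzero, hle, H⟩ := h
  have H' : ∀ s t : Fin 3, (gw hm c (r + f s) < gw hm c (r + f t) ↔ τ s < τ t) := H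
  have hf0 : f 0 = 0 := hzero 0 rfl
  have h01 : f 0 < f 1 := hmono (by decide)
  have h12 : f 1 < f 2 := hmono (by decide)
  have e0 : gw hm c (r + f 0) = gw hm c r := by rw [hf0, Nat.add_zero]
  refine ⟨r, f 1, f 2, by omega, h12, hle 2, ?_⟩
  rcases hτ with ⟨a, b⟩ | ⟨a, b⟩ | ⟨a, b⟩
  · exact Or.inl ⟨by rw [← e0]; exact (H' 1 0).mpr a, (H' 2 1).mpr b⟩
  · exact Or.inr (Or.inl ⟨(H' 2 1).mpr a, by rw [← e0]; exact (H' 0 2).mpr b⟩)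
  · exact Or.inr (Or.inr ⟨by rw [← e0]; exact (H' 0 2).mpr a, by rw [← e0]; exact (H' 1 0).mpr b⟩)

lemma inc_to_occ (hm : 0 < m) (hm3 : 3 ≤ m) {c : Equiv.Perm (Fin m)} {τ : Equiv.Perm (Fin 3)}
    (hτ : CycInc (τ 0) (τ 1) (τ 2)) (hP : Pinc hm c) : HasCyclicWordOcc hm c τ := by
  obtain ⟨r, i1, i2, h1, h2, h3, hw⟩ := hP
  have e10 : gw hm c (r + i1 + (i2 - i1)) = gw hm c (r + i2) := by
    rw [show r + i1 + (i2 - i1) = r + i2 by omega]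
  have e11 : gw hm c (r + i1 + (m - i1)) = gw hm c r := by
    rw [show r + i1 + (m - i1) = r + m by omega, gw_add]
  have e20 : gw hm c (r + i2 + (m - i2)) = gw hm c r := by
    rw [show r + i2 + (m - i2) = r + m by omega, gw_add]
  have e21 : gw hm c (r + i2 + (m - i2 + i1)) = gw hm c (r + i1) := by
    rw [show r + i2 + (m - i2 + i1) = r + i1 + m by omega, gw_add]
  rcases hw with ⟨ha, hb⟩ | ⟨ha, hb⟩ | ⟨ha, hb⟩ <;>
    rcases hτ with ⟨ta, tb⟩ | ⟨ta, tb⟩ | ⟨ta, tb⟩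
  -- word pattern 123 (ha : X<Y, hb : Y<Z)
  · exact occ_core hm hm3 r i1 i2 h1 h2 h3 (iff_of_true ha ta) (iff_of_true hb tb)
      (iff_of_true (ha.trans hb) (ta.trans tb))
  · exact occ_core hm hm3 (r + i2) (m - i2) (m - i2 + i1) (by omega) (by omega) (by omega)
      (by rw [e20]; exact iff_of_false (lt_asymm (ha.trans hb)) (lt_asymm (ta.trans tb)))
      (by rw [e20, e21]; exact iff_of_true ha ta)
      (by rw [e21]; exact iff_of_false (lt_asymm hb) (lt_asymm tb))
  · exact occ_core hm hm3 (r + i1) (i2 - i1) (m - i1) (by omega) (by omega) (by omega)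
      (by rw [e10]; exact iff_of_true hb tb)
      (by rw [e10, e11]; exact iff_of_false (lt_asymm (ha.trans hb)) (lt_asymm (ta.trans tb)))
      (by rw [e11]; exact iff_of_false (lt_asymm ha) (lt_asymm ta))
  -- word pattern 312 (ha : Y<Z, hb : Z<X)
  · exact occ_core hm hm3 (r + i1) (i2 - i1) (m - i1) (by omega) (by omega) (by omega)
      (by rw [e10]; exact iff_of_true ha ta)
      (by rw [e10, e11]; exact iff_of_true hb tb)
      (by rw [e11]; exact iff_of_true (ha.trans hb) (ta.trans tb))
  · exact occ_core hm hm3 r i1 i2 h1 h2 h3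
      (iff_of_false (lt_asymm (ha.trans hb)) (lt_asymm (ta.trans tb)))
      (iff_of_true ha ta)
      (iff_of_false (lt_asymm hb) (lt_asymm tb))
  · exact occ_core hm hm3 (r + i2) (m - i2) (m - i2 + i1) (by omega) (by omega) (by omega)
      (by rw [e20]; exact iff_of_true hb tb)
      (by rw [e20, e21]; exact iff_of_false (lt_asymm (ha.trans hb)) (lt_asymm (ta.trans tb)))
      (by rw [e21]; exact iff_of_false (lt_asymm ha) (lt_asymm ta))
  -- word pattern 231 (ha : Z<X, hb : X<Y)
  · exact occ_core hm hm3 (r + i2) (m - i2) (m - i2 + i1) (by omega) (by omega) (by omega)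
      (by rw [e20]; exact iff_of_true ha ta)
      (by rw [e20, e21]; exact iff_of_true hb tb)
      (by rw [e21]; exact iff_of_true (ha.trans hb) (ta.trans tb))
  · exact occ_core hm hm3 (r + i1) (i2 - i1) (m - i1) (by omega) (by omega) (by omega)
      (by rw [e10]; exact iff_of_false (lt_asymm (ha.trans hb)) (lt_asymm (ta.trans tb)))
      (by rw [e10, e11]; exact iff_of_true ha ta)
      (by rw [e11]; exact iff_of_false (lt_asymm hb) (lt_asymm tb))
  · exact occ_core hm hm3 r i1 i2 h1 h2 h3
      (iff_of_true hb tb)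
      (iff_of_false (lt_asymm (ha.trans hb)) (lt_asymm (ta.trans tb)))
      (iff_of_false (lt_asymm ha) (lt_asymm ta))

lemma dec_to_occ (hm : 0 < m) (hm3 : 3 ≤ m) {c : Equiv.Perm (Fin m)} {τ : Equiv.Perm (Fin 3)}
    (hτ : CycDec (τ 0) (τ 1) (τ 2)) (hP : Pdec hm c) : HasCyclicWordOcc hm c τ := by
  obtain ⟨r, i1, i2, h1, h2, h3, hw⟩ := hP
  have e10 : gw hm c (r + i1 + (i2 - i1)) = gw hm c (r + i2) := by
    rw [show r + i1 + (i2 - i1) = r + i2 by omega]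
  have e11 : gw hm c (r + i1 + (m - i1)) = gw hm c r := by
    rw [show r + i1 + (m - i1) = r + m by omega, gw_add]
  have e20 : gw hm c (r + i2 + (m - i2)) = gw hm c r := by
    rw [show r + i2 + (m - i2) = r + m by omega, gw_add]
  have e21 : gw hm c (r + i2 + (m - i2 + i1)) = gw hm c (r + i1) := by
    rw [show r + i2 + (m - i2 + i1) = r + i1 + m by omega, gw_add]
  rcases hw with ⟨ha, hb⟩ | ⟨ha, hb⟩ | ⟨ha, hb⟩ <;>
    rcases hτ with ⟨ta, tb⟩ | ⟨ta, tb⟩ | ⟨ta, tb⟩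
  -- word pattern 321 (ha : Y<X, hb : Z<Y)
  · exact occ_core hm hm3 r i1 i2 h1 h2 h3
      (iff_of_false (lt_asymm ha) (lt_asymm ta))
      (iff_of_false (lt_asymm hb) (lt_asymm tb))
      (iff_of_false (lt_asymm (hb.trans ha)) (lt_asymm (tb.trans ta)))
  · exact occ_core hm hm3 (r + i2) (m - i2) (m - i2 + i1) (by omega) (by omega) (by omega)
      (by rw [e20]; exact iff_of_true (hb.trans ha) (tb.trans ta))
      (by rw [e20, e21]; exact iff_of_false (lt_asymm ha) (lt_asymm ta))
      (by rw [e21]; exact iff_of_true hb tb)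
  · exact occ_core hm hm3 (r + i1) (i2 - i1) (m - i1) (by omega) (by omega) (by omega)
      (by rw [e10]; exact iff_of_false (lt_asymm hb) (lt_asymm tb))
      (by rw [e10, e11]; exact iff_of_true (hb.trans ha) (tb.trans ta))
      (by rw [e11]; exact iff_of_true ha ta)
  -- word pattern 132 (ha : Z<Y, hb : X<Z)
  · exact occ_core hm hm3 (r + i1) (i2 - i1) (m - i1) (by omega) (by omega) (by omega)
      (by rw [e10]; exact iff_of_false (lt_asymm ha) (lt_asymm ta))
      (by rw [e10, e11]; exact iff_of_false (lt_asymm hb) (lt_asymm tb))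
      (by rw [e11]; exact iff_of_false (lt_asymm (hb.trans ha)) (lt_asymm (tb.trans ta)))
  · exact occ_core hm hm3 r i1 i2 h1 h2 h3
      (iff_of_true (hb.trans ha) (tb.trans ta))
      (iff_of_false (lt_asymm ha) (lt_asymm ta))
      (iff_of_true hb tb)
  · exact occ_core hm hm3 (r + i2) (m - i2) (m - i2 + i1) (by omega) (by omega) (by omega)
      (by rw [e20]; exact iff_of_false (lt_asymm hb) (lt_asymm tb))
      (by rw [e20, e21]; exact iff_of_true (hb.trans ha) (tb.trans ta))
      (by rw [e21]; exact iff_of_true ha ta)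
  -- word pattern 213 (ha : X<Z, hb : Y<X)
  · exact occ_core hm hm3 (r + i2) (m - i2) (m - i2 + i1) (by omega) (by omega) (by omega)
      (by rw [e20]; exact iff_of_false (lt_asymm ha) (lt_asymm ta))
      (by rw [e20, e21]; exact iff_of_false (lt_asymm hb) (lt_asymm tb))
      (by rw [e21]; exact iff_of_false (lt_asymm (hb.trans ha)) (lt_asymm (tb.trans ta)))
  · exact occ_core hm hm3 (r + i1) (i2 - i1) (m - i1) (by omega) (by omega) (by omega)
      (by rw [e10]; exact iff_of_true (hb.trans ha) (tb.trans ta))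
      (by rw [e10, e11]; exact iff_of_false (lt_asymm ha) (lt_asymm ta))
      (by rw [e11]; exact iff_of_true hb tb)
  · exact occ_core hm hm3 r i1 i2 h1 h2 h3
      (iff_of_false (lt_asymm hb) (lt_asymm tb))
      (iff_of_true (hb.trans ha) (tb.trans ta))
      (iff_of_true ha ta)

lemma E1 (hm : 0 < m) : ¬ Pdec hm (1 : Equiv.Perm (Fin m)) := by
  rintro ⟨r, i1, i2, h1, h2, h3, hcyc⟩
  have key : ∀ i, i < m → ((r + i) % m = r % m + i ∨ (r + i) % m + m = r % m + i) := by
    intro i hi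
    rw [Nat.add_mod, Nat.mod_eq_of_lt hi]
    rcases Nat.lt_or_ge (r % m + i) m with h | h
    · left; exact Nat.mod_eq_of_lt h
    · right
      have hr : r % m < m := Nat.mod_lt _ hm
      rw [Nat.mod_eq_sub_mod h, Nat.mod_eq_of_lt (by omega)]
      omega
  have k0 : r % m < m := Nat.mod_lt _ hm
  have k1 := key i1 (by omega)
  have k2 := key i2 (by omega)
  have k1' : (r + i1) % m < m := Nat.mod_lt _ hm
  have k2' : (r + i2) % m < m := Nat.mod_lt _ hm
  simp only [gw, CycDec, Equiv.Perm.coe_one, id_eq, Fin.mk_lt_mk] at hcyc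
  omega

lemma neg_cyc [NeZero m] (x y z : Fin m) : CycInc x y z ↔ CycDec (-x) (-y) (-z) := by
  have hv : ∀ u : Fin m, ((-u : Fin m) : ℕ) = if (u : ℕ) = 0 then 0 else m - (u : ℕ) := by
    intro u
    have h0 : ((-u : Fin m) : ℕ) = (m - (u : ℕ)) % m := by rw [Fin.neg_def]
    rcases Nat.eq_zero_or_pos (u : ℕ) with h | h
    · simp [h0, h]
    · have := u.isLt
      rw [h0, Nat.mod_eq_of_lt (by omega), if_neg (by omega)]
  have hx := x.isLt
  have hy := y.isLt
  have hz := z.isLt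
  simp only [CycInc, CycDec, Fin.lt_def, hv]
  split_ifs <;> omega

lemma P_neg (hm : 0 < m) [NeZero m] (c : Equiv.Perm (Fin m)) :
    Pdec hm (c.trans (Equiv.neg (Fin m))) ↔ Pinc hm c := by
  have hg : ∀ n, gw hm (c.trans (Equiv.neg (Fin m))) n = - gw hm c n := fun n => rfl
  constructor
  · rintro ⟨r, i1, i2, h1, h2, h3, hc⟩
    refine ⟨r, i1, i2, h1, h2, h3, (neg_cyc _ _ _).mpr ?_⟩
    rw [← hg, ← hg, ← hg]; exact hc
  · rintro ⟨r, i1, i2, h1, h2, h3, hc⟩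
    refine ⟨r, i1, i2, h1, h2, h3, ?_⟩
    rw [hg, hg, hg]; exact (neg_cyc _ _ _).mp hc

lemma E2 (hm : 0 < m) [NeZero m] : ¬ Pinc hm (Equiv.neg (Fin m)) := by
  intro h
  have hid : (Equiv.neg (Fin m)).trans (Equiv.neg (Fin m)) = 1 := by
    ext p; simp
  exact E1 hm (hid ▸ (P_neg hm _).mpr h)

lemma U1 (hm : 0 < m) {c : Equiv.Perm (Fin m)}
    (hc0 : c ⟨0, hm⟩ = ⟨0, hm⟩) (h : ¬ Pdec hm c) : c = 1 := by
  have mono : ∀ i j : Fin m, i < j → c i < c j := by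
    intro i j hij
    rcases lt_trichotomy (c i) (c j) with h1 | h1 | h1
    · exact h1
    · exact absurd (c.injective h1) (ne_of_lt hij)
    · exfalso
      rcases Nat.eq_zero_or_pos (i : ℕ) with hi0 | hi0
      · have hi : i = ⟨0, hm⟩ := Fin.ext hi0
        rw [hi, hc0] at h1
        exact absurd h1 (by simp [Fin.lt_def])
      · apply h
        have gi : gw hm c (i : ℕ) = c i := by
          simp [gw, Nat.mod_eq_of_lt i.isLt]
        have gj : gw hm c (j : ℕ) = c j := by
          simp [gw, Nat.mod_eq_of_lt j.isLt]
        have g0 : gw hm c 0 = ⟨0, hm⟩ := by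
          simpa [gw, Nat.zero_mod] using hc0
        refine ⟨0, (i : ℕ), (j : ℕ), hi0, hij, by have := j.isLt; omega, ?_⟩
        rw [Nat.zero_add, Nat.zero_add, gi, gj, g0]
        refine Or.inr (Or.inl ⟨h1, ?_⟩)
        have hj0 : c j ≠ ⟨0, hm⟩ := by
          intro hh
          have := c.injective (hh.trans hc0.symm)
          have hj : (j : ℕ) = 0 := congrArg Fin.val this
          have := Fin.lt_def.mp hij
          omega
        have : ((c j : Fin m) : ℕ) ≠ 0 := fun hh => hj0 (Fin.ext hh)
        simp only [Fin.lt_def]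
        omega
  have le_ap : ∀ (e : Equiv.Perm (Fin m)), (∀ i j : Fin m, i < j → e i < e j) →
      ∀ k (hk : k < m), k ≤ ((e ⟨k, hk⟩ : Fin m) : ℕ) := by
    intro e he k
    induction k with
    | zero => intro hk; exact Nat.zero_le _
    | succ n ih =>
      intro hk
      have h1 : n < m := by omega
      have h2 : e ⟨n, h1⟩ < e ⟨n + 1, hk⟩ := he _ _ (by simp [Fin.lt_def])
      have h3 := ih h1
      have h4 := Fin.lt_def.mp h2
      omega
  have monos : ∀ i j : Fin m, i < j → c.symm i < c.symm j := by
    intro i j hij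
    rcases lt_trichotomy (c.symm i) (c.symm j) with h1 | h1 | h1
    · exact h1
    · exact absurd (c.symm.injective h1) (ne_of_lt hij)
    · have h2 := mono _ _ h1
      rw [Equiv.apply_symm_apply, Equiv.apply_symm_apply] at h2
      exact absurd hij (lt_asymm h2)
  apply Equiv.ext
  intro p
  have h1 := le_ap c mono (p : ℕ) p.isLt
  have h2 := le_ap c.symm monos ((c p : Fin m) : ℕ) (c p).isLt
  rw [Fin.eta] at h1
  rw [Fin.eta, Equiv.symm_apply_apply] at h2
  simp only [Equiv.Perm.coe_one, id_eq]
  exact Fin.ext (le_antisymm h2 h1)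

lemma U2 (hm : 0 < m) [NeZero m] {c : Equiv.Perm (Fin m)}
    (hc0 : c ⟨0, hm⟩ = ⟨0, hm⟩) (h : ¬ Pinc hm c) : c = Equiv.neg (Fin m) := by
  have hz : (⟨0, hm⟩ : Fin m) = 0 := Fin.ext (by simp)
  have hd : c.trans (Equiv.neg (Fin m)) = 1 := by
    refine U1 hm ?_ (fun hP => h ((P_neg hm c).mp hP))
    show -(c ⟨0, hm⟩) = ⟨0, hm⟩
    rw [hc0, hz, neg_zero]
  apply Equiv.ext
  intro p
  have h1 : -(c p) = p := by
    have := Equiv.ext_iff.mp hd p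
    simpa using this
  show c p = -p
  rw [← neg_neg (c p), h1]

lemma small_unique (hm : 0 < m) (hm2 : m ≤ 2) {c c' : Equiv.Perm (Fin m)}
    (hc0 : c ⟨0, hm⟩ = ⟨0, hm⟩) (hc0' : c' ⟨0, hm⟩ = ⟨0, hm⟩) : c = c' := by
  apply Equiv.ext
  intro p
  by_cases hp : p = ⟨0, hm⟩
  · rw [hp, hc0, hc0']
  · have h1 : c p ≠ ⟨0, hm⟩ := fun h => hp (c.injective (h.trans hc0.symm))
    have h2 : c' p ≠ ⟨0, hm⟩ := fun h => hp (c'.injective (h.trans hc0'.symm))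
    have v1 : ((c p : Fin m) : ℕ) ≠ 0 := fun h => h1 (Fin.ext h)
    have v2 : ((c' p : Fin m) : ℕ) ≠ 0 := fun h => h2 (Fin.ext h)
    have w1 := (c p).isLt
    have w2 := (c' p).isLt
    have : ((c p : Fin m) : ℕ) = ((c' p : Fin m) : ℕ) := by omega
    exact Fin.ext this

end Stmt12Aux

open Stmt12Aux in
/-- For every `m ≥ 1` and every pattern `τ ∈ S_3`, the number of `m`-cycles in `S_m`
(written smallest element first) that cycle-avoid `τ` equals `1`:
`L_m^{ca}(τ) = 1` for all `m ≥ 1` and all `τ ∈ S_3`. -/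
theorem stmt12 (m : ℕ) (hm : 1 ≤ m) (τ : Equiv.Perm (Fin 3)) :
    Nat.card {c : Equiv.Perm (Fin m) // c ⟨0, hm⟩ = ⟨0, hm⟩ ∧
      ¬ HasCyclicWordOcc hm c τ} = 1 := by
  rw [Nat.card_eq_one_iff_unique]
  by_cases hm3 : 3 ≤ m
  · haveI : NeZero m := ⟨by omega⟩
    have hz : (⟨0, hm⟩ : Fin m) = 0 := Fin.ext (by simp)
    rcases tau_class τ with hτ | hτ
    · refine ⟨⟨?_⟩, ⟨⟨Equiv.neg (Fin m), ?_, ?_⟩⟩⟩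
      · rintro ⟨c, hc0, hocc⟩ ⟨c', hc0', hocc'⟩
        have e1 : c = Equiv.neg (Fin m) :=
          U2 hm hc0 (fun hP => hocc (inc_to_occ hm hm3 hτ hP))
        have e2 : c' = Equiv.neg (Fin m) :=
          U2 hm hc0' (fun hP => hocc' (inc_to_occ hm hm3 hτ hP))
        exact Subtype.ext (e1.trans e2.symm)
      · show -(⟨0, hm⟩ : Fin m) = ⟨0, hm⟩
        rw [hz, neg_zero]
      · exact fun hocc => E2 hm (occ_to_inc hm hocc hτ)
    · refine ⟨⟨?_⟩, ⟨⟨1, rfl, ?_⟩⟩⟩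
      · rintro ⟨c, hc0, hocc⟩ ⟨c', hc0', hocc'⟩
        have e1 : c = 1 := U1 hm hc0 (fun hP => hocc (dec_to_occ hm hm3 hτ hP))
        have e2 : c' = 1 := U1 hm hc0' (fun hP => hocc' (dec_to_occ hm hm3 hτ hP))
        exact Subtype.ext (e1.trans e2.symm)
      · exact fun hocc => E1 hm (occ_to_dec hm hocc hτ)
  · have hno : ∀ c : Equiv.Perm (Fin m), ¬ HasCyclicWordOcc hm c τ := fun c h => hm3 h.1
    refine ⟨⟨?_⟩, ⟨⟨1, rfl, hno 1⟩⟩⟩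
    rintro ⟨c, hc0, -⟩ ⟨c', hc0', -⟩
    exact Subtype.ext (small_unique hm (by omega) hc0 hc0')
end

section
/- Let τ = 1 3 2 and for n ≥ 1 let A_n(y) = Σ y^{1+des(σ)} over all σ = σ_1…σ_n ∈ S_n with σ_1 = 1 and no τ-match. Then A_1(y) = A_2(y) = A_3(y) = y, and for all n ≥ 4, A_n(y) = A_{n−1}(y) + Σ_{k=4}^{n} C(n−2, k−2) A_{k−1}(y) A_{n−k+1}(y). -/
open Polynomial

open Classical in
/-- `A n = Σ y^{1 + des σ}` over all `σ ∈ S_n` with `σ₁ = 1` (0-based: `σ 0 = 0`)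
having no `132`-match (no `i` with `σ_i < σ_{i+2} < σ_{i+1}`), as a polynomial in
`y = X`. -/
noncomputable def A132 (n : ℕ) : Polynomial ℤ :=
  ∑ σ : Equiv.Perm (Fin n),
    if (∀ h : 0 < n, σ ⟨0, h⟩ = ⟨0, h⟩) ∧
        ¬ ∃ (i : ℕ) (h : i + 2 < n),
            σ ⟨i, by omega⟩ < σ ⟨i + 2, h⟩ ∧ σ ⟨i + 2, h⟩ < σ ⟨i + 1, by omega⟩
      then X ^ (1 + desPerm σ) else 0

namespace Stmt16

open Equiv Finset

/-- values of the permutation as a ℕ-valued function, junk `0` out of range -/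
def val {n : ℕ} (σ : Equiv.Perm (Fin n)) (i : ℕ) : ℕ :=
  if h : i < n then (σ ⟨i, h⟩ : ℕ) else 0

lemma val_def {n : ℕ} (σ : Equiv.Perm (Fin n)) {i : ℕ} (h : i < n) :
    val σ i = (σ ⟨i, h⟩ : ℕ) := dif_pos h

lemma vlt {n : ℕ} (σ : Equiv.Perm (Fin n)) {i j : ℕ} (hi : i < n) (hj : j < n) :
    σ ⟨i, hi⟩ < σ ⟨j, hj⟩ ↔ val σ i < val σ j := by
  rw [val_def σ hi, val_def σ hj, Fin.lt_def]

lemma val_lt {n : ℕ} (σ : Equiv.Perm (Fin n)) {i : ℕ} (h : i < n) : val σ i < n := by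
  rw [val_def σ h]; exact (σ ⟨i, h⟩).isLt

lemma val_inj {n : ℕ} (σ : Equiv.Perm (Fin n)) {i j : ℕ} (hi : i < n) (hj : j < n)
    (h : val σ i = val σ j) : i = j := by
  rw [val_def σ hi, val_def σ hj] at h
  have := σ.injective (Fin.ext h)
  simpa using congrArg Fin.val this

def NoMatchV {n : ℕ} (σ : Equiv.Perm (Fin n)) : Prop :=
  ∀ i, i + 2 < n → ¬ (val σ i < val σ (i + 2) ∧ val σ (i + 2) < val σ (i + 1))

def NoDes0V {n : ℕ} (σ : Equiv.Perm (Fin n)) : Prop :=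
  1 < n → ¬ val σ 1 < val σ 0

open Classical in
noncomputable def desV {n : ℕ} (σ : Equiv.Perm (Fin n)) : ℕ :=
  ∑ i ∈ Finset.range n, if i + 1 < n ∧ val σ (i + 1) < val σ i then 1 else 0

open Classical in
noncomputable def D (n : ℕ) : Polynomial ℤ :=
  ∑ σ : Equiv.Perm (Fin n),
    if NoMatchV σ ∧ NoDes0V σ then X ^ (1 + desV σ) else 0

open Classical in
lemma desPerm_eq_desV {n : ℕ} (σ : Equiv.Perm (Fin n)) : desPerm σ = desV σ := by
  rw [desPerm, Nat.card_eq_fintype_card, Fintype.card_subtype, Finset.card_filter, desV,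
    ← Fin.sum_univ_eq_sum_range
    (fun i => if i + 1 < n ∧ val σ (i + 1) < val σ i then 1 else 0) n]
  apply Finset.sum_congr rfl
  intro i _
  apply if_congr ?_ rfl rfl
  constructor
  · rintro ⟨h, hlt⟩
    exact ⟨h, (vlt σ h i.isLt).mp (by simpa [Fin.eta] using hlt)⟩
  · rintro ⟨h, hlt⟩
    exact ⟨h, by simpa [Fin.eta] using (vlt σ h i.isLt).mpr hlt⟩

lemma noMatch_iff {n : ℕ} (σ : Equiv.Perm (Fin n)) :
    (¬ ∃ (i : ℕ) (h : i + 2 < n),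
        σ ⟨i, by omega⟩ < σ ⟨i + 2, h⟩ ∧ σ ⟨i + 2, h⟩ < σ ⟨i + 1, by omega⟩) ↔ NoMatchV σ := by
  constructor
  · rintro h i h2 ⟨a, b⟩
    exact h ⟨i, h2, (vlt σ (by omega) h2).mpr a, (vlt σ h2 (by omega)).mpr b⟩
  · rintro h ⟨i, h2, a, b⟩
    exact h i h2 ⟨(vlt σ (by omega) h2).mp a, (vlt σ h2 (by omega)).mp b⟩

lemma cond0_iff {n : ℕ} (σ : Equiv.Perm (Fin n)) :
    (∀ h : 0 < n, σ ⟨0, h⟩ = ⟨0, h⟩) ↔ (0 < n → val σ 0 = 0) := by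
  constructor
  · intro h h0; rw [val_def σ h0, h h0]
  · intro h h0; have := h h0; rw [val_def σ h0] at this; exact Fin.ext this

open Classical in
lemma A132_val (n : ℕ) : A132 n = ∑ σ : Equiv.Perm (Fin n),
    if (0 < n → val σ 0 = 0) ∧ NoMatchV σ then X ^ (1 + desV σ) else 0 := by
  rw [A132]
  apply Finset.sum_congr rfl
  intro σ _
  rw [desPerm_eq_desV]
  exact if_congr (and_congr (cond0_iff σ) (noMatch_iff σ)) rfl rfl


open Classical in
lemma shift (r : ℕ) : A132 (r + 1) = D r := by
  classical
  rw [A132_val, D]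
  rw [← Equiv.sum_comp Equiv.Perm.decomposeFin.symm
      (fun σ : Equiv.Perm (Fin (r+1)) =>
        if (0 < r+1 → val σ 0 = 0) ∧ NoMatchV σ then X ^ (1 + desV σ) else 0)]
  rw [Fintype.sum_prod_type]
  rw [Finset.sum_eq_single (0 : Fin (r + 1))]
  · apply Finset.sum_congr rfl
    intro τ _
    set σ := Equiv.Perm.decomposeFin.symm (0, τ) with hσ
    have h00 : (⟨0, by omega⟩ : Fin (r+1)) = 0 := by simp [Fin.ext_iff]
    have hv0 : val σ 0 = 0 := by
      rw [val_def σ (by omega), h00, hσ, Equiv.Perm.decomposeFin_symm_apply_zero]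
      simp
    have hvs : ∀ i, i < r → val σ (i + 1) = val τ i + 1 := by
      intro i h
      rw [val_def σ (by omega), val_def τ h]
      have : (⟨i + 1, by omega⟩ : Fin (r+1)) = Fin.succ ⟨i, h⟩ := rfl
      rw [this, hσ, Equiv.Perm.decomposeFin_symm_apply_succ, Equiv.swap_self]
      simp
    have hcond : ((0 < r+1 → val σ 0 = 0) ∧ NoMatchV σ) ↔ (NoMatchV τ ∧ NoDes0V τ) := by
      constructor
      · rintro ⟨-, hm⟩
        constructor
        · intro i h2
          have e1 : val σ (i+1) = val τ i + 1 := hvs i (by omega)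
          have e2 : val σ (i+1+1) = val τ (i+1) + 1 := hvs (i+1) (by omega)
          have e3 : val σ (i+1+2) = val τ (i+2) + 1 := hvs (i+2) (by omega)
          have := hm (i+1) (by omega)
          omega
        · intro h1
          have e1 : val σ (0+1) = val τ 0 + 1 := hvs 0 (by omega)
          have e2 : val σ (0+2) = val τ 1 + 1 := hvs 1 (by omega)
          have := hm 0 (by omega)
          omega
      · rintro ⟨hm, hd⟩
        refine ⟨fun _ => hv0, ?_⟩
        intro i h2
        match i with
        | 0 =>
          have e1 : val σ (0+1) = val τ 0 + 1 := hvs 0 (by omega)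
          have e2 : val σ (0+2) = val τ 1 + 1 := hvs 1 (by omega)
          have := hd (by omega)
          omega
        | (j+1) =>
          have e1 : val σ (j+1) = val τ j + 1 := hvs j (by omega)
          have e2 : val σ (j+1+1) = val τ (j+1) + 1 := hvs (j+1) (by omega)
          have e3 : val σ (j+1+2) = val τ (j+2) + 1 := hvs (j+2) (by omega)
          have := hm j (by omega)
          omega
    have hdes : desV σ = desV τ := by
      rw [desV, desV, Finset.sum_range_succ']
      have h0 : (if 0 + 1 < r + 1 ∧ val σ (0 + 1) < val σ 0 then (1:ℕ) else 0) = 0 := by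
        rw [hv0, if_neg (by omega)]
      rw [h0, add_zero]
      apply Finset.sum_congr rfl
      intro i hi
      rw [Finset.mem_range] at hi
      have e1 : val σ (i+1) = val τ i + 1 := hvs i hi
      by_cases h : i + 1 < r
      · have e2 : val σ (i+1+1) = val τ (i+1) + 1 := hvs (i+1) h
        exact if_congr (by omega) rfl rfl
      · rw [if_neg (by omega), if_neg (by omega)]
    rw [hdes]
    exact if_congr hcond rfl rfl
  · intro p _ hp
    apply Finset.sum_eq_zero
    intro τ _
    rw [if_neg]
    rintro ⟨h0, -⟩
    have hval := h0 (by omega)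
    rw [val_def _ (by omega : 0 < r+1)] at hval
    apply hp
    have h00 : (⟨0, by omega⟩ : Fin (r+1)) = 0 := by simp [Fin.ext_iff]
    rw [h00, Equiv.Perm.decomposeFin_symm_apply_zero] at hval
    exact Fin.ext (by simpa using hval)
  · intro h
    exact absurd (Finset.mem_univ _) h


section Glue

variable {m q : ℕ}

lemma cardT (S : Finset (Fin m)) (hS : S.card = q) : (Finset.univ \ S).card = m - q := by
  rw [Finset.card_univ_diff, hS, Fintype.card_fin]

lemma card_filter_lt (hq : q ≤ m) :
    (Finset.univ.filter fun i : Fin m => (i : ℕ) < q).card = q := by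
  have h : ∀ a ∈ Finset.range q, a < m := fun a ha => by
    rw [Finset.mem_range] at ha; omega
  have heq : (Finset.univ.filter fun i : Fin m => (i : ℕ) < q) = (Finset.range q).attachFin h := by
    ext i
    simp [Finset.mem_attachFin]
  rw [heq, Finset.card_attachFin, Finset.card_range]

def gfun (S : Finset (Fin m)) (hS : S.card = q) (α : Equiv.Perm (Fin q))
    (δ : Equiv.Perm (Fin (m - q))) : Fin m → Fin m :=
  fun i => if h : (i : ℕ) < q then S.orderEmbOfFin hS (α ⟨i, h⟩)
    else (Finset.univ \ S).orderEmbOfFin (cardT S hS) (δ ⟨(i : ℕ) - q, by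
      have := i.isLt; omega⟩)

lemma gfun_inj (S : Finset (Fin m)) (hS : S.card = q) (α : Equiv.Perm (Fin q))
    (δ : Equiv.Perm (Fin (m - q))) : Function.Injective (gfun S hS α δ) := by
  intro a b hab
  simp only [gfun] at hab
  split_ifs at hab with h1 h2 h2
  · have := α.injective ((S.orderEmbOfFin hS).injective hab)
    have hv := congrArg Fin.val this
    exact Fin.ext hv
  · have m1 := Finset.orderEmbOfFin_mem S hS (α ⟨a, h1⟩)
    have m2 := Finset.orderEmbOfFin_mem _ (cardT S hS) (δ ⟨(b : ℕ) - q, by have := b.isLt; omega⟩)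
    rw [← hab] at m2
    rw [Finset.mem_sdiff] at m2
    exact absurd m1 m2.2
  · have m1 := Finset.orderEmbOfFin_mem S hS (α ⟨b, h2⟩)
    have m2 := Finset.orderEmbOfFin_mem _ (cardT S hS) (δ ⟨(a : ℕ) - q, by have := a.isLt; omega⟩)
    rw [hab] at m2
    rw [Finset.mem_sdiff] at m2
    exact absurd m1 m2.2
  · have := δ.injective ((Finset.orderEmbOfFin _ (cardT S hS)).injective hab)
    have hv := congrArg Fin.val this
    simp only at hv
    have ha := a.isLt
    have hb := b.isLt
    exact Fin.ext (by omega)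

noncomputable def glue (S : Finset (Fin m)) (hS : S.card = q) (α : Equiv.Perm (Fin q))
    (δ : Equiv.Perm (Fin (m - q))) : Equiv.Perm (Fin m) :=
  Equiv.ofBijective _ (Finite.injective_iff_bijective.mp (gfun_inj S hS α δ))

lemma glue_val_lt (S : Finset (Fin m)) (hS : S.card = q) (α : Equiv.Perm (Fin q))
    (δ : Equiv.Perm (Fin (m - q))) (hq : q ≤ m) {i : ℕ} (hi : i < q) :
    val (glue S hS α δ) i = (S.orderEmbOfFin hS (α ⟨i, hi⟩) : ℕ) := by
  rw [val_def _ (by omega)]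
  simp only [glue, Equiv.ofBijective_apply, gfun]
  rw [dif_pos hi]

lemma glue_val_ge (S : Finset (Fin m)) (hS : S.card = q) (α : Equiv.Perm (Fin q))
    (δ : Equiv.Perm (Fin (m - q))) {j : ℕ} (hj : j < m - q) :
    val (glue S hS α δ) (q + j) =
      ((Finset.univ \ S).orderEmbOfFin (cardT S hS) (δ ⟨j, hj⟩) : ℕ) := by
  rw [val_def _ (by omega)]
  simp only [glue, Equiv.ofBijective_apply, gfun]
  rw [dif_neg (by omega)]
  simp only [show q + j - q = j from by omega]


variable (S : Finset (Fin m)) (hS : S.card = q) (α : Equiv.Perm (Fin q))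
    (δ : Equiv.Perm (Fin (m - q)))

lemma glue_lt_lt (hq : q ≤ m) {i j : ℕ} (hi : i < q) (hj : j < q) :
    val (glue S hS α δ) i < val (glue S hS α δ) j ↔ val α i < val α j := by
  rw [glue_val_lt S hS α δ hq hi, glue_val_lt S hS α δ hq hj, val_def α hi, val_def α hj]
  exact ⟨fun h => Fin.lt_def.mp ((S.orderEmbOfFin hS).lt_iff_lt.mp (Fin.lt_def.mpr h)),
         fun h => Fin.lt_def.mp ((S.orderEmbOfFin hS).lt_iff_lt.mpr (Fin.lt_def.mpr h))⟩

lemma glue_ge_ge {a b : ℕ} (ha : a < m - q) (hb : b < m - q) :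
    val (glue S hS α δ) (q + a) < val (glue S hS α δ) (q + b) ↔ val δ a < val δ b := by
  rw [glue_val_ge S hS α δ ha, glue_val_ge S hS α δ hb, val_def δ ha, val_def δ hb]
  exact ⟨fun h => Fin.lt_def.mp
      (((Finset.univ \ S).orderEmbOfFin (cardT S hS)).lt_iff_lt.mp (Fin.lt_def.mpr h)),
    fun h => Fin.lt_def.mp
      (((Finset.univ \ S).orderEmbOfFin (cardT S hS)).lt_iff_lt.mpr (Fin.lt_def.mpr h))⟩

lemma embT_zero (hqm : q < m) (h0S : (⟨0, by omega⟩ : Fin m) ∉ S) (j : Fin (m - q)) :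
    (((Finset.univ \ S).orderEmbOfFin (cardT S hS) j : Fin m) : ℕ) = 0 ↔ (j : ℕ) = 0 := by
  have h0m : 0 < m := by omega
  have h0T : (⟨0, h0m⟩ : Fin m) ∈ Finset.univ \ S := by
    rw [Finset.mem_sdiff]; exact ⟨Finset.mem_univ _, h0S⟩
  have hpos : 0 < m - q := by omega
  have hz : (Finset.univ \ S).orderEmbOfFin (cardT S hS) ⟨0, hpos⟩ = ⟨0, h0m⟩ := by
    rw [Finset.orderEmbOfFin_zero (cardT S hS) hpos]
    apply le_antisymm
    · exact Finset.min'_le _ _ h0T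
    · exact Fin.le_def.mpr (Nat.zero_le _)
  constructor
  · intro h
    have h2 : (Finset.univ \ S).orderEmbOfFin (cardT S hS) j = ⟨0, h0m⟩ := Fin.ext (by simpa using h)
    rw [← hz] at h2
    have h3 := ((Finset.univ \ S).orderEmbOfFin (cardT S hS)).injective h2
    have := congrArg Fin.val h3
    simpa using this
  · intro h
    have hj0 : j = ⟨0, hpos⟩ := Fin.ext h
    rw [hj0, hz]

lemma glue_val_zero (hqm : q < m) (h0S : (⟨0, by omega⟩ : Fin m) ∉ S) {a : ℕ} (ha : a < m - q) :
    val (glue S hS α δ) (q + a) = 0 ↔ val δ a = 0 := by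
  rw [glue_val_ge S hS α δ ha, embT_zero S hS hqm h0S, val_def δ ha]

lemma glue_ne0 (hqm : q < m) (h0S : (⟨0, by omega⟩ : Fin m) ∉ S) {i : ℕ} (hi : i < q) :
    val (glue S hS α δ) i ≠ 0 := by
  rw [glue_val_lt S hS α δ (by omega) hi]
  intro h
  have h0m : 0 < m := by omega
  have heq : S.orderEmbOfFin hS (α ⟨i, hi⟩) = ⟨0, h0m⟩ := Fin.ext (by simpa using h)
  have mem := Finset.orderEmbOfFin_mem S hS (α ⟨i, hi⟩)
  rw [heq] at mem
  exact h0S mem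

lemma glue_image (hqm : q < m) :
    (Finset.univ.filter fun i : Fin m => (i : ℕ) < q).image (glue S hS α δ) = S := by
  apply Finset.eq_of_subset_of_card_le
  · intro v hv
    rw [Finset.mem_image] at hv
    obtain ⟨i, hi, rfl⟩ := hv
    rw [Finset.mem_filter] at hi
    have h2 : glue S hS α δ i = S.orderEmbOfFin hS (α ⟨↑i, hi.2⟩) := by
      simp only [glue, Equiv.ofBijective_apply, gfun]
      rw [dif_pos hi.2]
    rw [h2]
    exact Finset.orderEmbOfFin_mem S hS _
  · rw [Finset.card_image_of_injective _ (glue S hS α δ).injective,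
      card_filter_lt (by omega : q ≤ m), hS]


lemma glue_apply_lt' (w : Fin m) (hw : (w : ℕ) < q) :
    glue S hS α δ w = S.orderEmbOfFin hS (α ⟨(w : ℕ), hw⟩) := by
  simp only [glue, Equiv.ofBijective_apply, gfun]
  rw [dif_pos hw]

lemma glue_apply_ge' (w : Fin m) (hw : ¬ (w : ℕ) < q) :
    glue S hS α δ w = (Finset.univ \ S).orderEmbOfFin (cardT S hS)
      (δ ⟨(w : ℕ) - q, by have := w.isLt; omega⟩) := by
  simp only [glue, Equiv.ofBijective_apply, gfun]
  rw [dif_neg hw]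

lemma glue_des (hqm : q < m) (h1q : 1 ≤ q) (h0S : (⟨0, by omega⟩ : Fin m) ∉ S)
    (hδ0 : val δ 0 = 0) :
    desV (glue S hS α δ) = desV α + desV δ + 1 := by
  set g := glue S hS α δ with hg
  rw [desV, Finset.range_eq_Ico, ← Finset.sum_Ico_consecutive _ (Nat.zero_le q) (le_of_lt hqm)]
  have hsuf : (∑ i ∈ Finset.Ico q m, if i + 1 < m ∧ val g (i + 1) < val g i then (1:ℕ) else 0)
      = desV δ := by
    rw [Finset.sum_Ico_eq_sum_range, desV]
    apply Finset.sum_congr rfl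
    intro j hj
    rw [Finset.mem_range] at hj
    by_cases h : j + 1 < m - q
    · have e : val g (q + (j+1)) < val g (q + j) ↔ val δ (j+1) < val δ j :=
        glue_ge_ge S hS α δ h hj
      exact if_congr (by
        constructor
        · rintro ⟨-, hlt⟩; exact ⟨h, e.mp hlt⟩
        · rintro ⟨-, hlt⟩; exact ⟨by omega, e.mpr hlt⟩) rfl rfl
    · rw [if_neg (by omega), if_neg (by omega)]
  have hpre : (∑ i ∈ Finset.Ico 0 q, if i + 1 < m ∧ val g (i + 1) < val g i then (1:ℕ) else 0)
      = desV α + 1 := by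
    rw [← Finset.range_eq_Ico]
    have hsplit : ∀ i ∈ Finset.range q,
        (if i + 1 < m ∧ val g (i + 1) < val g i then (1:ℕ) else 0)
        = (if i + 1 < q ∧ val α (i + 1) < val α i then (1:ℕ) else 0)
          + (if i = q - 1 then 1 else 0) := by
      intro i hi
      rw [Finset.mem_range] at hi
      by_cases hiq : i + 1 < q
      · rw [if_neg (show ¬ (i = q - 1) from by omega), add_zero]
        have e : val g (i+1) < val g i ↔ val α (i+1) < val α i :=
          glue_lt_lt S hS α δ (by omega) hiq (by omega)
        exact if_congr (by
          constructor
          · rintro ⟨-, hlt⟩; exact ⟨hiq, e.mp hlt⟩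
          · rintro ⟨-, hlt⟩; exact ⟨by omega, e.mpr hlt⟩) rfl rfl
      · have hieq : i = q - 1 := by omega
        have h1 : val g (i + 1) = 0 := by
          have h2 := (glue_val_zero S hS α δ hqm h0S (show 0 < m - q from by omega)).mpr hδ0
          rwa [show q + 0 = i + 1 from by omega] at h2
        have h2 : val g i ≠ 0 := glue_ne0 S hS α δ hqm h0S (show i < q from by omega)
        rw [if_pos (show i + 1 < m ∧ val g (i + 1) < val g i from ⟨by omega, by omega⟩),
          if_neg (show ¬ (i + 1 < q ∧ val α (i + 1) < val α i) from by omega),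
          if_pos hieq]
    rw [Finset.sum_congr rfl hsplit, Finset.sum_add_distrib, desV,
      Finset.sum_ite_eq' (Finset.range q) (q-1) (fun _ => (1:ℕ)),
      if_pos (Finset.mem_range.mpr (by omega))]
  rw [hpre, hsuf]
  omega

lemma glue_noMatchV (hqm : q < m) (h2q : 2 ≤ q) (h0S : (⟨0, by omega⟩ : Fin m) ∉ S)
    (hδ0 : val δ 0 = 0) :
    NoMatchV (glue S hS α δ) ↔ (NoMatchV α ∧ NoMatchV δ) := by
  set g := glue S hS α δ with hg
  constructor
  · intro h
    constructor
    · rintro i hi2 ⟨a, b⟩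
      refine h i (by omega) ⟨?_, ?_⟩
      · exact (glue_lt_lt S hS α δ (by omega) (by omega) hi2).mpr a
      · exact (glue_lt_lt S hS α δ (by omega) hi2 (by omega)).mpr b
    · rintro i hi2 ⟨a, b⟩
      refine h (q + i) (by omega) ⟨?_, ?_⟩
      · exact (glue_ge_ge S hS α δ (by omega) hi2).mpr a
      · exact (glue_ge_ge S hS α δ hi2 (by omega)).mpr b
  · rintro ⟨hα, hδ⟩ i hi2 ⟨a, b⟩
    by_cases c1 : i + 2 < q
    · exact hα i c1 ⟨(glue_lt_lt S hS α δ (by omega) (by omega) c1).mp a,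
        (glue_lt_lt S hS α δ (by omega) c1 (by omega)).mp b⟩
    · by_cases c2 : i + 2 = q
      · have h1 : val g (i + 2) = 0 := by
          have h2 := (glue_val_zero S hS α δ hqm h0S (show 0 < m - q from by omega)).mpr hδ0
          rwa [show q + 0 = i + 2 from by omega] at h2
        omega
      · by_cases c3 : i + 1 = q
        · have h1 : val g (i + 1) = 0 := by
            have h2 := (glue_val_zero S hS α δ hqm h0S (show 0 < m - q from by omega)).mpr hδ0
            rwa [show q + 0 = i + 1 from by omega] at h2
          omega
        · have hqi : q ≤ i := by omega
          obtain ⟨a', rfl⟩ : ∃ a', i = q + a' := ⟨i - q, by omega⟩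
          exact hδ a' (by omega) ⟨(glue_ge_ge S hS α δ (by omega) (by omega)).mp a,
            (glue_ge_ge S hS α δ (by omega) (by omega)).mp b⟩

lemma glue_noDes0V (hqm : q < m) (h2q : 2 ≤ q) :
    NoDes0V (glue S hS α δ) ↔ NoDes0V α := by
  have e : val (glue S hS α δ) 1 < val (glue S hS α δ) 0 ↔ val α 1 < val α 0 :=
    glue_lt_lt S hS α δ (by omega) (by omega) (by omega)
  constructor
  · intro h h1 hlt
    exact h (by omega) (e.mpr hlt)
  · intro h h1 hlt
    exact h (by omega) (e.mp hlt)

lemma perm_ext_val {n : ℕ} {α α' : Equiv.Perm (Fin n)} (h : ∀ j, j < n → val α j = val α' j) :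
    α = α' := by
  apply Equiv.ext
  intro j
  have h2 := h ↑j j.isLt
  rw [val_def α j.isLt, val_def α' j.isLt] at h2
  apply Fin.ext
  simpa [Fin.eta] using h2

lemma glue_injective {P : Finset (Fin m)} (hPa hPb : P.card = q) (hqm : q < m)
    (β β' : Equiv.Perm (Fin q)) (ε ε' : Equiv.Perm (Fin (m - q)))
    (h : glue P hPa β ε = glue P hPb β' ε') : β = β' ∧ ε = ε' := by
  have hss : hPa = hPb := Subsingleton.elim _ _
  cases hss
  constructor
  · apply perm_ext_val
    intro j hj
    have h1 := glue_val_lt P hPa β ε (by omega) hj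
    have h2 := glue_val_lt P hPa β' ε' (by omega) hj
    rw [h] at h1
    have he : (P.orderEmbOfFin hPa (β ⟨j, hj⟩) : ℕ) = (P.orderEmbOfFin hPa (β' ⟨j, hj⟩) : ℕ) := by
      rw [← h1, h2]
    have h3 := (P.orderEmbOfFin hPa).injective (Fin.ext he)
    rw [val_def β hj, val_def β' hj, h3]
  · apply perm_ext_val
    intro j hj
    have h1 := glue_val_ge P hPa β ε (show j < m - q from hj)
    have h2 := glue_val_ge P hPa β' ε' (show j < m - q from hj)
    rw [h] at h1
    have he : ((Finset.univ \ P).orderEmbOfFin (cardT P hPa) (ε ⟨j, hj⟩) : ℕ)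
        = ((Finset.univ \ P).orderEmbOfFin (cardT P hPa) (ε' ⟨j, hj⟩) : ℕ) := by
      rw [← h1, h2]
    have h3 := ((Finset.univ \ P).orderEmbOfFin (cardT P hPa)).injective (Fin.ext he)
    rw [val_def ε hj, val_def ε' hj, h3]
end Glue


open Classical in
lemma fiber {m q : ℕ} (h2q : 2 ≤ q) (hqm : q < m) :
    (∑ σ : Equiv.Perm (Fin m), if val σ q = 0 ∧ NoMatchV σ ∧ NoDes0V σ
        then X ^ (1 + desV σ) else (0:Polynomial ℤ))
    = ((m-1).choose q : Polynomial ℤ) * (D q * A132 (m - q)) := by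
  classical
  have h0m : 0 < m := by omega
  set z0 : Fin m := ⟨0, h0m⟩ with hz0
  set P := Finset.powersetCard q (Finset.univ.erase z0) with hPdef
  set Aq := Finset.univ.filter (fun β : Equiv.Perm (Fin q) => NoMatchV β ∧ NoDes0V β) with hAq
  set Bq := Finset.univ.filter (fun ε : Equiv.Perm (Fin (m-q)) =>
      (0 < m - q → val ε 0 = 0) ∧ NoMatchV ε) with hBq
  have hmem : ∀ {x : Finset (Fin m) × Equiv.Perm (Fin q) × Equiv.Perm (Fin (m-q))},
      x ∈ P ×ˢ Aq ×ˢ Bq → ((x.1.card = q ∧ z0 ∉ x.1) ∧ (NoMatchV x.2.1 ∧ NoDes0V x.2.1)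
        ∧ (val x.2.2 0 = 0 ∧ NoMatchV x.2.2)) := by
    intro x hx
    rw [Finset.mem_product] at hx
    obtain ⟨h1, h2⟩ := hx
    rw [Finset.mem_product] at h2
    obtain ⟨h2, h3⟩ := h2
    rw [hPdef, Finset.mem_powersetCard] at h1
    rw [hAq, Finset.mem_filter] at h2
    rw [hBq, Finset.mem_filter] at h3
    refine ⟨⟨h1.2, fun hc => ?_⟩, h2.2, h3.2.1 (by omega), h3.2.2⟩
    have h4 := h1.1 hc
    rw [Finset.mem_erase] at h4
    exact h4.1 rfl
  rw [← Finset.sum_filter]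
  have hbij : ∑ x ∈ P ×ˢ Aq ×ˢ Bq,
      (X : Polynomial ℤ) ^ ((1 + desV x.2.1) + (1 + desV x.2.2))
      = ∑ σ ∈ Finset.univ.filter (fun σ : Equiv.Perm (Fin m) =>
          val σ q = 0 ∧ NoMatchV σ ∧ NoDes0V σ), X ^ (1 + desV σ) := by
    apply Finset.sum_bij (fun x hx => glue x.1 (hmem hx).1.1 x.2.1 x.2.2)
    · -- maps into target
      intro x hx
      rw [Finset.mem_filter]
      refine ⟨Finset.mem_univ _, ?_, ?_, ?_⟩
      · exact (glue_val_zero x.1 (hmem hx).1.1 x.2.1 x.2.2 hqm (hmem hx).1.2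
          (show 0 < m - q from by omega)).mpr (hmem hx).2.2.1
      · exact (glue_noMatchV x.1 (hmem hx).1.1 x.2.1 x.2.2 hqm h2q (hmem hx).1.2
          (hmem hx).2.2.1).mpr ⟨(hmem hx).2.1.1, (hmem hx).2.2.2⟩
      · exact (glue_noDes0V x.1 (hmem hx).1.1 x.2.1 x.2.2 hqm h2q).mpr (hmem hx).2.1.2
    · -- injective
      rintro ⟨S1, β1, ε1⟩ hx ⟨S2, β2, ε2⟩ hy h
      have hSS : S1 = S2 := by
        rw [← glue_image S1 (hmem hx).1.1 β1 ε1 hqm, ← glue_image S2 (hmem hy).1.1 β2 ε2 hqm, h]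
      subst hSS
      obtain ⟨hβ, hε⟩ := glue_injective (hmem hx).1.1 (hmem hy).1.1 hqm β1 β2 ε1 ε2 h
      rw [hβ, hε]
    · -- surjective
      intro σ hσ
      rw [Finset.mem_filter] at hσ
      obtain ⟨-, hq0, hmσ, hdσ⟩ := hσ
      set S := (Finset.univ.filter fun i : Fin m => (i : ℕ) < q).image σ with hSdef
      have hScard : S.card = q := by
        rw [hSdef, Finset.card_image_of_injective _ σ.injective, card_filter_lt (le_of_lt hqm)]
      have hσq : σ ⟨q, hqm⟩ = z0 := by
        rw [val_def σ hqm] at hq0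
        exact Fin.ext hq0
      have h0S : z0 ∉ S := by
        rw [hSdef]
        intro hc
        rw [Finset.mem_image] at hc
        obtain ⟨i, hi, hσi⟩ := hc
        rw [Finset.mem_filter] at hi
        have h5 : i = ⟨q, hqm⟩ := σ.injective (by rw [hσi, hσq])
        have h6 := congrArg Fin.val h5
        have h7 := hi.2
        simp only at h6
        omega
      have hmemS : ∀ j : Fin q, σ ⟨(j:ℕ), by have := j.isLt; omega⟩ ∈ S := fun j =>
        Finset.mem_image_of_mem σ
          (by rw [Finset.mem_filter]; exact ⟨Finset.mem_univ _, j.isLt⟩)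
      have hmemT : ∀ j : Fin (m - q), σ ⟨q + (j:ℕ), by have := j.isLt; omega⟩
          ∈ Finset.univ \ S := fun j => by
        rw [Finset.mem_sdiff]
        refine ⟨Finset.mem_univ _, fun hc => ?_⟩
        have hc' : σ ⟨q + (j:ℕ), by have := j.isLt; omega⟩
            ∈ (Finset.univ.filter fun i : Fin m => (i : ℕ) < q).image σ := hc
        rw [Finset.mem_image] at hc'
        obtain ⟨i, hi, hσi⟩ := hc'
        rw [Finset.mem_filter] at hi
        have h5 := σ.injective hσi
        have h6 := congrArg Fin.val h5
        have h7 := hi.2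
        simp only at h6
        omega
      have hβinj : Function.Injective (fun j : Fin q =>
          (S.orderIsoOfFin hScard).symm ⟨σ ⟨(j:ℕ), by have := j.isLt; omega⟩, hmemS j⟩) := by
        intro a b hab
        simp only at hab
        have h2 := (S.orderIsoOfFin hScard).symm.injective hab
        have h3 := Subtype.ext_iff.mp h2
        have h4 := σ.injective (Fin.ext (congrArg Fin.val h3))
        have h5 := congrArg Fin.val h4
        exact Fin.ext h5
      have hεinj : Function.Injective (fun j : Fin (m - q) =>
          ((Finset.univ \ S).orderIsoOfFin (cardT S hScard)).symm
            ⟨σ ⟨q + (j:ℕ), by have := j.isLt; omega⟩, hmemT j⟩) := by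
        intro a b hab
        simp only at hab
        have h2 := ((Finset.univ \ S).orderIsoOfFin (cardT S hScard)).symm.injective hab
        have h3 := Subtype.ext_iff.mp h2
        have h4 := σ.injective (Fin.ext (congrArg Fin.val h3))
        have h5 := congrArg Fin.val h4
        simp only at h5
        have := a.isLt
        have := b.isLt
        exact Fin.ext (by omega)
      set β := Equiv.ofBijective _ (Finite.injective_iff_bijective.mp hβinj) with hβdef
      set ε := Equiv.ofBijective _ (Finite.injective_iff_bijective.mp hεinj) with hεdef
      have hglue : glue S hScard β ε = σ := by
        apply Equiv.ext
        intro w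
        by_cases hw : (w : ℕ) < q
        · rw [glue_apply_lt' S hScard β ε w hw]
          have hb : β ⟨(w:ℕ), hw⟩ = (S.orderIsoOfFin hScard).symm
              ⟨σ ⟨(w:ℕ), by omega⟩, hmemS ⟨(w:ℕ), hw⟩⟩ := rfl
          rw [hb, ← Finset.coe_orderIsoOfFin_apply, OrderIso.apply_symm_apply]
        · rw [glue_apply_ge' S hScard β ε w hw]
          have hb : ε ⟨(w:ℕ) - q, by have := w.isLt; omega⟩
              = ((Finset.univ \ S).orderIsoOfFin (cardT S hScard)).symm
              ⟨σ ⟨q + ((w:ℕ) - q), by have := w.isLt; omega⟩,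
                hmemT ⟨(w:ℕ) - q, by have := w.isLt; omega⟩⟩ := rfl
          rw [hb, ← Finset.coe_orderIsoOfFin_apply, OrderIso.apply_symm_apply]
          exact congrArg σ (Fin.ext (show q + ((w:ℕ) - q) = (w:ℕ) from by omega))
      have hδ0 : val ε 0 = 0 := by
        have h1 := glue_val_ge S hScard β ε (show 0 < m - q from by omega)
        rw [hglue] at h1
        have h2 : (((Finset.univ \ S).orderEmbOfFin (cardT S hScard))
            (ε ⟨0, by omega⟩) : ℕ) = 0 := by
          rw [← h1]
          exact hq0
        have h3 := (embT_zero S hScard hqm h0S (ε ⟨0, by omega⟩)).mp h2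
        rw [val_def ε (show 0 < m - q from by omega)]
        exact h3
      have hmg : NoMatchV (glue S hScard β ε) := by rw [hglue]; exact hmσ
      have hdg : NoDes0V (glue S hScard β ε) := by rw [hglue]; exact hdσ
      obtain ⟨hmβ, hmε⟩ := (glue_noMatchV S hScard β ε hqm h2q h0S hδ0).mp hmg
      have hdβ := (glue_noDes0V S hScard β ε hqm h2q).mp hdg
      refine ⟨⟨S, β, ε⟩, ?_, ?_⟩
      · rw [Finset.mem_product]
        constructor
        · rw [hPdef, Finset.mem_powersetCard]
          refine ⟨fun v hv => ?_, hScard⟩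
          rw [Finset.mem_erase]
          exact ⟨fun hc => h0S (hc ▸ hv), Finset.mem_univ _⟩
        · rw [Finset.mem_product]
          constructor
          · rw [hAq, Finset.mem_filter]
            exact ⟨Finset.mem_univ _, hmβ, hdβ⟩
          · rw [hBq, Finset.mem_filter]
            exact ⟨Finset.mem_univ _, fun _ => hδ0, hmε⟩
      · exact hglue
    · -- weights
      intro x hx
      have e := glue_des x.1 (hmem hx).1.1 x.2.1 x.2.2 hqm (by omega) (hmem hx).1.2
        (hmem hx).2.2.1
      rw [e]
      congr 1
      omega
  rw [← hbij, Finset.sum_product]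
  have hDq : (∑ β ∈ Aq, (X : Polynomial ℤ) ^ (1 + desV β)) = D q := by
    rw [hAq, Finset.sum_filter, D]
  have hAmq : (∑ ε ∈ Bq, (X : Polynomial ℤ) ^ (1 + desV ε)) = A132 (m - q) := by
    rw [hBq, Finset.sum_filter, A132_val (m - q)]
  have hinner : ∀ S ∈ P, (∑ y ∈ Aq ×ˢ Bq,
      (X : Polynomial ℤ) ^ ((1 + desV y.1) + (1 + desV y.2))) = D q * A132 (m - q) := by
    intro S _
    rw [← hDq, ← hAmq, Finset.sum_mul_sum]
    rw [Finset.sum_product]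
    apply Finset.sum_congr rfl
    intro β _
    apply Finset.sum_congr rfl
    intro ε _
    rw [pow_add]
  rw [Finset.sum_congr rfl hinner, Finset.sum_const]
  rw [hPdef, Finset.card_powersetCard, Finset.card_erase_of_mem (Finset.mem_univ _),
    Finset.card_univ, Fintype.card_fin, nsmul_eq_mul]


open Classical in
lemma D_fibers (m : ℕ) (hm : 0 < m) : D m = ∑ q ∈ Finset.range m,
    ∑ σ : Equiv.Perm (Fin m), if val σ q = 0 ∧ NoMatchV σ ∧ NoDes0V σ
      then X ^ (1 + desV σ) else (0 : Polynomial ℤ) := by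
  have key : ∀ σ : Equiv.Perm (Fin m),
      (∑ q ∈ Finset.range m, if val σ q = 0 ∧ NoMatchV σ ∧ NoDes0V σ
        then X ^ (1 + desV σ) else (0 : Polynomial ℤ))
      = if NoMatchV σ ∧ NoDes0V σ then X ^ (1 + desV σ) else 0 := by
    intro σ
    have hq0lt : (↑(σ.symm ⟨0, hm⟩) : ℕ) < m := (σ.symm ⟨0, hm⟩).isLt
    have hval : val σ ↑(σ.symm ⟨0, hm⟩) = 0 := by
      rw [val_def σ hq0lt]
      have h2 : (⟨↑(σ.symm ⟨0, hm⟩), hq0lt⟩ : Fin m) = σ.symm ⟨0, hm⟩ := Fin.ext rfl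
      rw [h2, Equiv.apply_symm_apply]
    rw [Finset.sum_eq_single (↑(σ.symm ⟨0, hm⟩) : ℕ)]
    · exact if_congr (and_iff_right hval) rfl rfl
    · intro q hq hne
      rw [if_neg]
      rintro ⟨hq0, -⟩
      apply hne
      rw [Finset.mem_range] at hq
      rw [val_def σ hq] at hq0
      have h3 : σ ⟨q, hq⟩ = ⟨0, hm⟩ := Fin.ext hq0
      have h4 : σ.symm ⟨0, hm⟩ = ⟨q, hq⟩ := by rw [← h3, Equiv.symm_apply_apply]
      rw [h4]
    · intro hq
      exact absurd (Finset.mem_range.mpr hq0lt) hq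
  calc D m = ∑ σ : Equiv.Perm (Fin m),
      ∑ q ∈ Finset.range m, if val σ q = 0 ∧ NoMatchV σ ∧ NoDes0V σ
        then X ^ (1 + desV σ) else (0 : Polynomial ℤ) := by
        rw [D]
        exact Finset.sum_congr rfl (fun σ _ => (key σ).symm)
    _ = _ := Finset.sum_comm

open Classical in
lemma fiber0 (m : ℕ) (hm : 0 < m) :
    (∑ σ : Equiv.Perm (Fin m), if val σ 0 = 0 ∧ NoMatchV σ ∧ NoDes0V σ
      then X ^ (1 + desV σ) else (0 : Polynomial ℤ)) = A132 m := by
  rw [A132_val]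
  apply Finset.sum_congr rfl
  intro σ _
  apply if_congr ?_ rfl rfl
  constructor
  · rintro ⟨h0, hm', hd⟩
    exact ⟨fun _ => h0, hm'⟩
  · rintro ⟨h0, hm'⟩
    refine ⟨h0 hm, hm', ?_⟩
    intro h1 hlt
    rw [h0 hm] at hlt
    omega

open Classical in
lemma fiber1 (m : ℕ) (hm1 : 1 < m) :
    (∑ σ : Equiv.Perm (Fin m), if val σ 1 = 0 ∧ NoMatchV σ ∧ NoDes0V σ
      then X ^ (1 + desV σ) else (0 : Polynomial ℤ)) = 0 := by
  apply Finset.sum_eq_zero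
  rintro σ -
  rw [if_neg]
  rintro ⟨h1, -, hd⟩
  have h0 : val σ 0 ≠ 0 := fun hc => by
    have := val_inj σ (by omega) (by omega) (hc.trans h1.symm)
    omega
  exact hd hm1 (by omega)

lemma D_eq (m : ℕ) (hm : 2 ≤ m) : D m = A132 m +
    ∑ q ∈ Finset.Ico 2 m, ((m-1).choose q : Polynomial ℤ) * (D q * A132 (m - q)) := by
  classical
  rw [D_fibers m (by omega), Finset.range_eq_Ico,
    ← Finset.sum_Ico_consecutive _ (by omega : 0 ≤ 2) hm]
  congr 1
  · rw [← Finset.range_eq_Ico]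
    rw [Finset.sum_range_succ, Finset.sum_range_one]
    rw [fiber0 m (by omega), fiber1 m (by omega), add_zero]
  · apply Finset.sum_congr rfl
    intro q hq
    rw [Finset.mem_Ico] at hq
    exact fiber (by omega) (by omega)

lemma D_zero : D 0 = X := by
  classical
  have huniq : ∀ σ : Equiv.Perm (Fin 0), σ = 1 := fun σ => Equiv.ext fun i => i.elim0
  have huniv : (Finset.univ : Finset (Equiv.Perm (Fin 0))) = {1} := by
    ext σ
    simp [huniq σ]
  rw [D, huniv, Finset.sum_singleton,
    if_pos ⟨fun i h2 => absurd h2 (by omega), fun h => absurd h (by omega)⟩]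
  have hd : desV (1 : Equiv.Perm (Fin 0)) = 0 := by
    rw [desV]
    simp
  rw [hd, pow_one]

lemma A132_one : A132 1 = X := by rw [shift 0, D_zero]

lemma D_one : D 1 = A132 1 := by
  rw [D_fibers 1 one_pos, Finset.sum_range_one, fiber0 1 one_pos]

lemma A132_two : A132 2 = X := by
  rw [show (2:ℕ) = 1 + 1 from rfl, shift 1, D_one, A132_one]

lemma A132_three : A132 3 = X := by
  rw [show (3:ℕ) = 2 + 1 from rfl, shift 2, D_eq 2 (by omega), Finset.Ico_self,
    Finset.sum_empty, add_zero, A132_two]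

end Stmt16


/-- For `τ = 132`: `A_1 = A_2 = A_3 = y` and for all `n ≥ 4`,
`A_n = A_{n-1} + Σ_{k=4}^{n} C(n-2, k-2) A_{k-1} A_{n-k+1}`. -/
theorem stmt16 :
    (A132 1 = X ∧ A132 2 = X ∧ A132 3 = X) ∧
    ∀ n : ℕ, 4 ≤ n →
      A132 n = A132 (n - 1) +
        ∑ k ∈ Finset.Icc 4 n,
          ((n - 2).choose (k - 2) : Polynomial ℤ) * (A132 (k - 1) * A132 (n - k + 1)) := by
  refine ⟨⟨Stmt16.A132_one, Stmt16.A132_two, Stmt16.A132_three⟩, ?_⟩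
  intro n hn
  have h1 : A132 n = Stmt16.D (n - 1) := by
    rw [show n = (n - 1) + 1 from by omega, Stmt16.shift (n - 1),
      show n - 1 + 1 - 1 = n - 1 from by omega]
  rw [h1, Stmt16.D_eq (n - 1) (by omega)]
  congr 1
  apply Finset.sum_nbij' (fun q => q + 2) (fun k => k - 2)
  · intro q hq
    rw [Finset.mem_Ico] at hq
    rw [Finset.mem_Icc]
    omega
  · intro k hk
    rw [Finset.mem_Icc] at hk
    rw [Finset.mem_Ico]
    omega
  · intro q hq
    show q + 2 - 2 = q
    omega
  · intro k hk
    rw [Finset.mem_Icc] at hk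
    show k - 2 + 2 = k
    omega
  · intro q hq
    rw [Finset.mem_Ico] at hq
    show ((n - 1 - 1).choose q : Polynomial ℤ) * (Stmt16.D q * A132 (n - 1 - q))
      = ((n - 2).choose (q + 2 - 2) : Polynomial ℤ)
        * (A132 (q + 2 - 1) * A132 (n - (q + 2) + 1))
    rw [show q + 2 - 2 = q from by omega, show q + 2 - 1 = q + 1 from by omega,
      show n - (q + 2) + 1 = n - 1 - q from by omega, show n - 1 - 1 = n - 2 from by omega,
      show A132 (q + 1) = Stmt16.D q from Stmt16.shift q]
end
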